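/- arXiv:1702.02637 — 7 statements merged into one kernel-verified Lean document; each statement's English description precedes it below -/
import Mathlib

section
/- The number of permutations p of {1,...,n} such that p(i+1) ≠ p(i) + k for all i with 1 ≤ i ≤ n-1 equals Σ_{j=0}^{n-k} (-1)^j · C(n-k, j) · (n-j)!, for fixed k with 1 ≤ k < n. -/
/-!
Inclusion–exclusion over the set `S ⊆ {0, …, n-k-1}` of successions `j (j+k)` that are forced
to occur. Permutations containing all successions of `S` are counted by `(n - #S)!`: if `a` is
the largest element of `S`, deleting `a + k` from such a permutation (viewed as a word) is a
bijection onto the words on the remaining `n - 1` values containing the successions of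
`S \ {a}`, the inverse reinserting `a + k` right after `a`.
-/

open Finset

namespace List

theorem pair_infix_iff_getElem {α : Type*} {a b : α} {l : List α} :
    [a, b] <:+: l ↔ ∃ i, ∃ h : i + 1 < l.length, l[i] = a ∧ l[i + 1] = b := by
  constructor
  · rintro ⟨s, t, rfl⟩
    exact ⟨s.length, by simp, by simp [getElem_append_right], by simp [getElem_append_right]⟩
  · rintro ⟨i, h, rfl, rfl⟩
    have hdrop : l.drop i = l[i] :: l[i + 1] :: l.drop (i + 2) := by
      rw [drop_eq_getElem_cons, drop_eq_getElem_cons]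
    exact IsPrefix.isInfix ⟨_, hdrop.symm⟩ |>.trans (drop_suffix i l).isInfix

variable {α : Type*} [DecidableEq α]

def insertAfter (a c : α) : List α → List α
  | [] => []
  | x :: xs => if x = a then x :: c :: xs else x :: insertAfter a c xs

theorem insertAfter_append_cons {a : α} (c : α) {u : List α} (v : List α) (h : a ∉ u) :
    insertAfter a c (u ++ a :: v) = u ++ a :: c :: v := by
  induction u with
  | nil => simp [insertAfter]
  | cons x xs ih =>
    rw [mem_cons, not_or] at h
    simp [insertAfter, Ne.symm h.1, ih h.2]

theorem perm_insertAfter {a : α} (c : α) {l : List α} (h : a ∈ l) :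
    insertAfter a c l ~ c :: l := by
  obtain ⟨u, v, hu, rfl, -⟩ := exists_erase_eq h
  rw [insertAfter_append_cons c v hu]
  simpa using perm_middle (l₁ := u ++ [a]) (a := c) (l₂ := v)

theorem erase_insertAfter (a : α) {c : α} {l : List α} (hc : c ∉ l) :
    (insertAfter a c l).erase c = l := by
  induction l with
  | nil => rfl
  | cons x xs ih =>
    rw [mem_cons, not_or] at hc
    rcases eq_or_ne x a with rfl | hx
    · simp [insertAfter, Ne.symm hc.1]
    · simp [insertAfter, hx, Ne.symm hc.1, ih hc.2]

theorem insertAfter_erase {a c : α} {l : List α} (hl : l.Nodup) (h : [a, c] <:+: l) :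
    insertAfter a c (l.erase c) = l := by
  obtain ⟨s, t, rfl⟩ := h
  have hc : c ∉ s ++ [a] := fun hc =>
    disjoint_of_nodup_append (l₂ := c :: t) (by simpa using hl) hc mem_cons_self
  have ha : a ∉ s := fun ha =>
    disjoint_of_nodup_append (l₂ := a :: c :: t) (by simpa using hl) ha mem_cons_self
  rw [show s ++ [a, c] ++ t = s ++ [a] ++ c :: t by simp, erase_append_right _ hc,
    erase_cons_head, append_assoc, singleton_append, insertAfter_append_cons c t ha]
  simp

theorem IsInfix.insertAfter {x y a : α} (c : α) {l : List α} (h : [x, y] <:+: l) (hxa : x ≠ a) :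
    [x, y] <:+: insertAfter a c l := by
  induction l with
  | nil => simp at h
  | cons z zs ih =>
    rcases infix_cons_iff.mp h with ⟨t, ht⟩ | h
    · obtain ⟨rfl, rfl⟩ : z = x ∧ zs = y :: t := by simpa using ht.symm
      by_cases hy : y = a <;> simp only [List.insertAfter, hxa, hy, if_false, if_true] <;>
        exact ⟨[], _, rfl⟩
    · by_cases hz : z = a <;> simp only [List.insertAfter, hz, if_false, if_true]
      · exact infix_cons (infix_cons h)
      · exact infix_cons (ih h)

theorem IsInfix.erase_of_ne {x y c : α} {l : List α} (h : [x, y] <:+: l) (hx : x ≠ c)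
    (hy : y ≠ c) : [x, y] <:+: l.erase c := by
  obtain ⟨s, t, rfl⟩ := h
  by_cases hc : c ∈ s
  · rw [append_assoc, erase_append_left _ hc, ← append_assoc]
    exact infix_append _ _ _
  · rw [append_assoc, erase_append_right _ hc, cons_append, erase_cons_tail (by simpa using hx),
      cons_append, erase_cons_tail (by simpa using hy)]
    simpa using infix_append s [x, y] (t.erase c)

end List

namespace Finset

variable {α : Type*} [DecidableEq α]

noncomputable def arrangements (V : Finset α) : Finset (List α) := V.toList.permutations.toFinset

theorem mem_arrangements {V : Finset α} {l : List α} :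
    l ∈ V.arrangements ↔ l.Nodup ∧ ∀ x, x ∈ l ↔ x ∈ V := by
  rw [arrangements, List.mem_toFinset, List.mem_permutations]
  refine ⟨fun h => ⟨h.nodup_iff.2 V.nodup_toList, fun x => h.mem_iff.trans V.mem_toList⟩,
    fun ⟨hl, hV⟩ => (List.perm_ext_iff_of_nodup hl V.nodup_toList).2 fun x => ?_⟩
  rw [hV, mem_toList]

theorem card_arrangements (V : Finset α) : #V.arrangements = (#V).factorial := by
  rw [arrangements, List.toFinset_card_of_nodup (List.nodup_permutations _ V.nodup_toList),
    List.length_permutations, length_toList]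

end Finset

noncomputable def arrangementsWithSuccessions (k : ℕ) (V S : Finset ℕ) : Finset (List ℕ) :=
  V.arrangements.filter fun l => ∀ j ∈ S, [j, j + k] <:+: l

theorem mem_arrangementsWithSuccessions {k : ℕ} {V S : Finset ℕ} {l : List ℕ} :
    l ∈ arrangementsWithSuccessions k V S ↔
      (l.Nodup ∧ ∀ x, x ∈ l ↔ x ∈ V) ∧ ∀ j ∈ S, [j, j + k] <:+: l := by
  rw [arrangementsWithSuccessions, mem_filter, mem_arrangements]

/-- Since every `j ∈ S` is below `a`, the letter `a + k` occurs in no succession of `S`, so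
deleting it keeps them all. -/
theorem card_arrangementsWithSuccessions_insert {k a : ℕ} {V S : Finset ℕ} (hk : 0 < k)
    (ha : a ∈ V) (hak : a + k ∈ V) (hS : ∀ j ∈ S, j < a) :
    #(arrangementsWithSuccessions k V (insert a S)) =
      #(arrangementsWithSuccessions k (V.erase (a + k)) S) := by
  refine card_bij' (fun l _ => l.erase (a + k)) (fun l _ => l.insertAfter a (a + k))
    ?_ ?_ ?_ ?_
  · simp only [mem_arrangementsWithSuccessions, forall_mem_insert]
    rintro l ⟨⟨hl, hV⟩, -, hsucc⟩
    refine ⟨⟨hl.erase _, fun x => by rw [hl.mem_erase_iff, hV, mem_erase]⟩, fun j hj => ?_⟩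
    have := hS j hj
    exact (hsucc j hj).erase_of_ne (by omega) (by omega)
  · simp only [mem_arrangementsWithSuccessions, forall_mem_insert]
    rintro l ⟨⟨hl, hV⟩, hsucc⟩
    have hc : a + k ∉ l := by simp [hV]
    have hperm := List.perm_insertAfter (a + k) ((hV a).2 (mem_erase.2 ⟨by omega, ha⟩))
    refine ⟨⟨hperm.nodup_iff.2 (hl.cons hc), fun x => ?_⟩, ?_, fun j hj => ?_⟩
    · rw [hperm.mem_iff, List.mem_cons, hV, mem_erase]
      by_cases hx : x = a + k <;> simp [hx, hak]
    · obtain ⟨u, v, hu, hla, -⟩ := List.exists_erase_eq ((hV a).2 (mem_erase.2 ⟨by omega, ha⟩))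
      rw [hla, List.insertAfter_append_cons _ _ hu]
      exact ⟨u, v, by simp⟩
    · exact (hsucc j hj).insertAfter _ (hS j hj).ne
  · simp only [mem_arrangementsWithSuccessions, forall_mem_insert]
    rintro l ⟨⟨hl, -⟩, hsucc, -⟩
    exact List.insertAfter_erase hl hsucc
  · simp only [mem_arrangementsWithSuccessions]
    rintro l ⟨⟨-, hV⟩, -⟩
    exact List.erase_insertAfter a (by simp [hV])

theorem card_arrangementsWithSuccessions {k : ℕ} (hk : 0 < k) (V S : Finset ℕ)
    (hS : ∀ j ∈ S, j ∈ V ∧ j + k ∈ V) :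
    #(arrangementsWithSuccessions k V S) = (#V - #S).factorial := by
  induction S using Finset.induction_on_max generalizing V with
  | empty => simp [arrangementsWithSuccessions, card_arrangements]
  | insert a S hlt ih =>
    obtain ⟨ha, hak⟩ := hS a (mem_insert_self a S)
    rw [card_arrangementsWithSuccessions_insert hk ha hak hlt, ih, card_erase_of_mem hak,
      card_insert_of_notMem fun h => (hlt a h).false]
    · congr 1; omega
    · intro j hj
      have := hlt j hj
      obtain ⟨hj, hjk⟩ := hS j (mem_insert_of_mem hj)
      exact ⟨mem_erase.2 ⟨by omega, hj⟩, mem_erase.2 ⟨by omega, hjk⟩⟩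

namespace Equiv.Perm

variable {n : ℕ}

def oneLine (p : Perm (Fin n)) : List ℕ := List.ofFn fun i => (p i : ℕ)

theorem oneLine_injective : Function.Injective (oneLine (n := n)) := fun _ _ h =>
  Equiv.ext fun i => Fin.ext (congrFun (List.ofFn_injective h) i)

theorem map_univ_oneLine :
    (univ : Finset (Perm (Fin n))).map ⟨oneLine, oneLine_injective⟩ = (range n).arrangements := by
  refine eq_of_subset_of_card_le (fun l hl => ?_) ?_
  · obtain ⟨p, -, rfl⟩ := mem_map.1 hl
    refine mem_arrangements.2 ⟨List.nodup_ofFn.2 (Fin.val_injective.comp p.injective), fun x => ?_⟩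
    simp only [Function.Embedding.coeFn_mk, oneLine, List.mem_ofFn, mem_range]
    exact ⟨fun ⟨i, hi⟩ => hi ▸ (p i).isLt, fun hx => ⟨p.symm ⟨x, hx⟩, by simp⟩⟩
  · rw [card_arrangements, card_map, card_univ, Fintype.card_perm, Fintype.card_fin, card_range]

theorem card_filter_oneLine (P : List ℕ → Prop) [DecidablePred P] :
    #{p : Perm (Fin n) | P p.oneLine} = #{l ∈ (range n).arrangements | P l} := by
  rw [← map_univ_oneLine, filter_map, card_map]
  rfl

theorem pair_infix_oneLine_iff {p : Perm (Fin n)} {a b : ℕ} :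
    [a, b] <:+: p.oneLine ↔ ∃ i : Fin n, ∃ h : (i : ℕ) + 1 < n,
      (p i : ℕ) = a ∧ (p ⟨i + 1, h⟩ : ℕ) = b := by
  simp only [List.pair_infix_iff_getElem, oneLine, List.length_ofFn, List.getElem_ofFn]
  exact ⟨fun ⟨i, h, hi⟩ => ⟨⟨i, by omega⟩, h, hi⟩, fun ⟨i, h, hi⟩ => ⟨i, h, hi⟩⟩

end Equiv.Perm

open Equiv

theorem forall_ne_add_iff_forall_not_pair_infix {n k : ℕ} (p : Perm (Fin n)) :
    (∀ i : Fin n, ∀ h : (i : ℕ) + 1 < n, ((p ⟨(i : ℕ) + 1, h⟩ : Fin n) : ℕ) ≠ (p i : ℕ) + k) ↔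
      ∀ j ∈ range (n - k), ¬ [j, j + k] <:+: p.oneLine := by
  simp only [mem_range, Perm.pair_infix_oneLine_iff, not_exists, not_and]
  refine ⟨fun h j _ i hi hpi hsucc => h i hi (by rw [hsucc, hpi]), fun h i hi hsucc => ?_⟩
  have := (p ⟨i + 1, hi⟩).isLt
  exact h (p i) (by omega) i hi rfl hsucc

theorem card_filter_successions_oneLine {n k : ℕ} (hk : 0 < k) {S : Finset ℕ}
    (hS : S ⊆ range (n - k)) :
    #{p : Perm (Fin n) | ∀ j ∈ S, [j, j + k] <:+: p.oneLine} = (n - #S).factorial := by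
  rw [Perm.card_filter_oneLine (fun l => ∀ j ∈ S, [j, j + k] <:+: l),
    ← arrangementsWithSuccessions, card_arrangementsWithSuccessions hk, card_range]
  intro j hj
  have := mem_range.1 (hS hj)
  exact ⟨mem_range.2 (by omega), mem_range.2 (by omega)⟩

theorem d_k_n_formula_general (n k : ℕ) (hk : 1 ≤ k) :
    (Nat.card {p : Equiv.Perm (Fin n) //
        ∀ i : Fin n, ∀ h : (i : ℕ) + 1 < n,
          ((p ⟨(i : ℕ) + 1, h⟩ : Fin n) : ℕ) ≠ (p i : ℕ) + k} : ℤ) =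
      ∑ j ∈ Finset.range (n - k + 1),
        (-1 : ℤ) ^ j * (n - k).choose j * (n - j).factorial := by
  let hasSucc (j : ℕ) : Finset (Perm (Fin n)) := {p | [j, j + k] <:+: p.oneLine}
  calc (Nat.card {p : Equiv.Perm (Fin n) // _} : ℤ)
      = #((range (n - k)).inf fun j => (hasSucc j)ᶜ) := by
        rw [Nat.card_eq_fintype_card, Fintype.card_subtype]
        congr 2
        ext p
        simp [hasSucc, Finset.mem_inf, forall_ne_add_iff_forall_not_pair_infix]
    _ = ∑ S ∈ (range (n - k)).powerset, (-1 : ℤ) ^ #S * #(S.inf hasSucc) :=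
        inclusion_exclusion_card_inf_compl _ _
    _ = ∑ S ∈ (range (n - k)).powerset, (-1 : ℤ) ^ #S * (n - #S).factorial := by
        refine sum_congr rfl fun S hS => ?_
        rw [← card_filter_successions_oneLine hk (mem_powerset.1 hS)]
        congr 3
        ext p
        simp [hasSucc, Finset.mem_inf]
    _ = _ := by
        rw [sum_powerset_apply_card fun m => (-1 : ℤ) ^ m * (n - m).factorial, card_range]
        refine sum_congr rfl fun j _ => ?_
        rw [nsmul_eq_mul]
        ring

/-- The number of permutations `p` of `{1,...,n}` with no `k`-succession
(`p(i+1) ≠ p(i) + k` for `1 ≤ i ≤ n-1`) equals `∑_{j=0}^{n-k} (-1)^j C(n-k,j) (n-j)!`.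
Values are 0-indexed: Fin-element `v` represents the value `v+1`. -/
theorem d_k_n_formula (n k : ℕ) (hk : 1 ≤ k) (hkn : k < n) :
    (Nat.card {p : Equiv.Perm (Fin n) //
        ∀ i : Fin n, ∀ h : (i : ℕ) + 1 < n,
          ((p ⟨(i : ℕ) + 1, h⟩ : Fin n) : ℕ) ≠ (p i : ℕ) + k} : ℤ) =
      ∑ j ∈ Finset.range (n - k + 1),
        (-1 : ℤ) ^ j * (n - k).choose j * (n - j).factorial :=
  d_k_n_formula_general n k hk
end

section
/- For fixed k with 1 ≤ k ≤ n-1, the number d*^k_n of permutations p of {1,...,n} that avoid circular k-successions (i.e., p(i+1) ≠ p(i) + k for 1 ≤ i ≤ n-1 and p(1) ≠ p(n) + k, with the forbidden pairs being j(j+k) for 1 ≤ j ≤ n-k) satisfies d*^k_n = n · d^{k-1}_{n-1}, where d^{k-1}_{n-1} = Σ_{j=0}^{n-k} (-1)^j · C(n-k, j) · (n-1-j)!. -/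
/-!
By inclusion–exclusion over the sets `T ⊆ {0, …, n-k-1}` of values `t` that are required to be
cyclically followed by `t + k`, it suffices to show that exactly `n · (n-1-|T|)!` permutations
satisfy these requirements. Rotating positions acts freely on them, so we may fix `p 0 = 0` and
read `p` as a list of `{0, …, n-1}` starting with `0` in which each `t ∈ T` is immediately
followed by `t + k`. For the largest `v ∈ T`, the value `v + k` ends its glued block, so deleting
it is a bijection onto the lists of one element fewer with requirements `T \ {v}`; hence there
are `(n-1-|T|)!` such lists.
-/

open Finset Nat Equiv

theorem card_nodup_list_toFinset_eq {α : Type*} [DecidableEq α] (s : Finset α) :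
    Nat.card {l : List α // l.Nodup ∧ l.toFinset = s} = s.card ! := by
  have hmem : ∀ l : List α, l.Nodup ∧ l.toFinset = s ↔ l ∈ s.toList.permutations.toFinset := by
    intro l
    rw [List.mem_toFinset, List.mem_permutations]
    constructor
    · rintro ⟨hl, rfl⟩
      exact (List.perm_ext_iff_of_nodup hl (nodup_toList _)).2 (by simp)
    · intro h
      exact ⟨h.nodup_iff.2 (nodup_toList s), by ext; simp [h.mem_iff]⟩
  simp_rw [hmem]
  rw [Nat.card_eq_fintype_card, Fintype.card_coe,
    List.toFinset_card_of_nodup (List.nodup_permutations _ (nodup_toList s)),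
    List.length_permutations, length_toList]

theorem List.pair_infix_erase {α : Type*} [DecidableEq α] {x y z : α} {l : List α}
    (h : [x, y] <:+: l) (hx : z ≠ x) (hy : z ≠ y) : [x, y] <:+: l.erase z := by
  obtain ⟨l₁, l₂, rfl⟩ := h
  by_cases hz : z ∈ l₁
  · rw [List.append_assoc, List.erase_append_left _ hz]
    exact ⟨l₁.erase z, l₂, by simp⟩
  · rw [List.append_assoc, List.erase_append_right _ hz]
    exact ⟨l₁, l₂.erase z, by simp [List.erase_cons_tail, hx.symm, hy.symm]⟩

theorem List.pair_infix_insert {α : Type*} {x y v z : α} {l₁ l₂ : List α}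
    (h : [x, y] <:+: l₁ ++ v :: l₂) (hx : x ≠ v) : [x, y] <:+: l₁ ++ v :: z :: l₂ := by
  obtain ⟨s, t, hst⟩ := h
  rw [List.append_assoc, List.append_eq_append_iff] at hst
  rcases hst with ⟨a, rfl, ha⟩ | ⟨c, rfl, hc⟩
  · rcases a with _ | ⟨_, _ | ⟨_, a⟩⟩
    · simp_all
    · simp only [List.cons_append, List.nil_append, List.cons.injEq] at ha
      obtain ⟨rfl, rfl, rfl⟩ := ha
      exact ⟨s, z :: t, by simp⟩
    · simp only [List.cons_append, List.cons.injEq] at ha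
      obtain ⟨rfl, rfl, rfl⟩ := ha
      exact ⟨s, a ++ v :: z :: l₂, by simp⟩
  · rcases c with _ | ⟨_, c⟩
    · simp_all
    · simp only [List.cons_append, List.cons.injEq] at hc
      obtain ⟨rfl, rfl⟩ := hc
      exact ⟨l₁ ++ v :: z :: c, t, by simp⟩

theorem List.erase_append_cons_cons {α : Type*} [DecidableEq α] {x y : α} {l₁ l₂ : List α}
    (hy : y ∉ l₁) (hxy : x ≠ y) : (l₁ ++ x :: y :: l₂).erase y = l₁ ++ x :: l₂ := by
  rw [List.erase_append_right _ hy, List.erase_cons_tail (by simpa using hxy), List.erase_cons_head]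

theorem List.pair_infix_ofFn_iff {α : Type*} {n : ℕ} {f : Fin n → α} {x y : α} :
    [x, y] <:+: List.ofFn f ↔ ∃ (i : ℕ) (h : i + 1 < n), f ⟨i, by omega⟩ = x ∧ f ⟨i + 1, h⟩ = y := by
  rw [List.infix_iff_getElem?]
  constructor
  · rintro ⟨i, -, h⟩
    obtain ⟨_, h0⟩ := by simpa using h 0
    obtain ⟨hi, h1⟩ := by simpa [Nat.add_comm] using h 1
    exact ⟨i, hi, h0, h1⟩
  · rintro ⟨i, hi, rfl, rfl⟩
    refine ⟨i, by simp; omega, fun j hj => ?_⟩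
    simp only [List.length_cons, List.length_nil] at hj
    interval_cases j <;> simp [Nat.add_comm, hi]; omega

def IsLinkedArrangement (k : ℕ) (s T : Finset ℕ) (a : ℕ) (l : List ℕ) : Prop :=
  l.Nodup ∧ l.toFinset = s ∧ l.head? = some a ∧ ∀ t ∈ T, [t, t + k] <:+: l

section LinkedArrangement

variable {k v a : ℕ} {s T : Finset ℕ}

theorem IsLinkedArrangement.exists_eq_append {l : List ℕ}
    (hl : IsLinkedArrangement k s (insert v T) a l) :
    ∃ l₁ l₂, l = l₁ ++ v :: (v + k) :: l₂ ∧ v ∉ l₁ ∧ v + k ∉ l₁ ∧ v ∉ l₂ := by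
  obtain ⟨l₁, l₂, rfl⟩ := hl.2.2.2 v (mem_insert_self v T)
  have hnd := hl.1
  simp only [List.append_assoc, List.cons_append, List.nil_append, List.nodup_append,
    List.nodup_cons, List.mem_cons, not_or] at hnd
  exact ⟨l₁, l₂, by simp, fun h => hnd.2.2 v h v (by simp) rfl,
    fun h => hnd.2.2 _ h _ (by simp) rfl, hnd.2.1.1.2⟩

theorem IsLinkedArrangement.erase {l : List ℕ} (hl : IsLinkedArrangement k s (insert v T) a l)
    (hT : ∀ t ∈ T, t < v) (ha : a ≠ v + k) :
    IsLinkedArrangement k (s.erase (v + k)) T a (l.erase (v + k)) := by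
  obtain ⟨hnd, hs, hhead, hsucc⟩ := hl
  refine ⟨hnd.erase _, ?_, ?_, fun t ht => ?_⟩
  · ext x
    rw [List.mem_toFinset, hnd.mem_erase_iff, mem_erase, ← hs, List.mem_toFinset]
  · obtain ⟨l, rfl⟩ : ∃ l', l = a :: l' := List.head?_eq_some_iff.1 hhead
    simp [ha]
  · have := hT t ht
    exact List.pair_infix_erase (hsucc t (mem_insert_of_mem ht)) (by omega) (by omega)

theorem IsLinkedArrangement.insertAfter {l₁ l₂ : List ℕ}
    (hl : IsLinkedArrangement k (s.erase (v + k)) T a (l₁ ++ v :: l₂))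
    (hT : ∀ t ∈ T, t < v) (hvk : v + k ∈ s) :
    IsLinkedArrangement k s (insert v T) a (l₁ ++ v :: (v + k) :: l₂) := by
  obtain ⟨hnd, hs, hhead, hsucc⟩ := hl
  have hvkl : v + k ∉ l₁ ++ v :: l₂ := by
    rw [← List.mem_toFinset, hs]
    exact notMem_erase _ _
  refine ⟨?_, ?_, ?_, ?_⟩
  · rw [← List.singleton_append, ← List.append_assoc, List.nodup_middle]
    simpa [hvkl] using hnd
  · rw [← insert_erase hvk, ← hs]
    ext x
    simp only [List.mem_toFinset, mem_insert, List.mem_append, List.mem_cons]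
    tauto
  · cases l₁ <;> simpa using hhead
  · simp only [forall_mem_insert]
    exact ⟨⟨l₁, l₂, by simp⟩, fun t ht => List.pair_infix_insert (hsucc t ht) (hT t ht).ne⟩

theorem card_isLinkedArrangement_insert (hk : 1 ≤ k) (hT : ∀ t ∈ T, t < v) (hv : v ∈ s)
    (hvk : v + k ∈ s) (ha : a ≠ v + k) :
    Nat.card {l // IsLinkedArrangement k s (insert v T) a l} =
      Nat.card {l // IsLinkedArrangement k (s.erase (v + k)) T a l} := by
  have hvv : v ≠ v + k := by omega
  refine Nat.card_eq_of_bijective (fun l => ⟨_, l.2.erase hT ha⟩) ⟨?_, ?_⟩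
  · rintro ⟨l, hl⟩ ⟨l', hl'⟩ h
    obtain ⟨l₁, l₂, rfl, hv₁, hvk₁, hv₂⟩ := hl.exists_eq_append
    obtain ⟨l₁', l₂', rfl, -, hvk₁', -⟩ := hl'.exists_eq_append
    simp only [Subtype.mk.injEq, List.erase_append_cons_cons hvk₁ hvv,
      List.erase_append_cons_cons hvk₁' hvv] at h
    obtain ⟨rfl, -, rfl⟩ := (List.append_cons_inj_of_notMem hv₁ hv₂).1 h
    rfl
  · rintro ⟨l', hl'⟩
    have hvl : v ∈ l' := by
      rw [← List.mem_toFinset, hl'.2.1]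
      exact mem_erase.2 ⟨hvv, hv⟩
    obtain ⟨l₁, l₂, rfl⟩ := List.append_of_mem hvl
    have hvk₁ : v + k ∉ l₁ := fun h => by
      simpa [← List.mem_toFinset, hl'.2.1] using List.mem_append_left (v :: l₂) h
    exact ⟨⟨_, hl'.insertAfter hT hvk⟩, Subtype.ext (List.erase_append_cons_cons hvk₁ hvv)⟩

end LinkedArrangement

theorem card_isLinkedArrangement_empty (k : ℕ) {s : Finset ℕ} {a : ℕ} (ha : a ∈ s) :
    Nat.card {l // IsLinkedArrangement k s ∅ a l} = (s.card - 1)! := by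
  rw [← Finset.card_erase_of_mem ha, ← card_nodup_list_toFinset_eq]
  symm
  refine Nat.card_eq_of_bijective (fun l => ⟨a :: l.1, ?_⟩) ⟨?_, ?_⟩
  · obtain ⟨l, hnd, hs⟩ := l
    have hal : a ∉ l := fun h => Finset.notMem_erase a s (hs ▸ List.mem_toFinset.2 h)
    refine ⟨List.nodup_cons.2 ⟨hal, hnd⟩, ?_, rfl, by simp⟩
    rw [List.toFinset_cons, hs, Finset.insert_erase ha]
  · intro l l' h
    exact Subtype.ext (List.cons_injective (congrArg Subtype.val h))
  · rintro ⟨_ | ⟨b, l⟩, hnd, hs, hhead, -⟩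
    · simp at hhead
    · obtain rfl : b = a := by simpa using hhead
      refine ⟨⟨l, (List.nodup_cons.1 hnd).2, ?_⟩, rfl⟩
      rw [← hs, List.toFinset_cons, Finset.erase_insert (by simpa using (List.nodup_cons.1 hnd).1)]

theorem card_isLinkedArrangement {k a : ℕ} (hk : 1 ≤ k) (T : Finset ℕ) {s : Finset ℕ}
    (hT : ∀ t ∈ T, t ∈ s ∧ t + k ∈ s) (ha : a ∈ s) (haT : ∀ t ∈ T, t + k ≠ a) :
    Nat.card {l // IsLinkedArrangement k s T a l} = (s.card - 1 - T.card)! := by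
  induction T using Finset.induction_on_max generalizing s with
  | empty => simpa using card_isLinkedArrangement_empty k ha
  | insert v T hlt ih =>
    have hvT : v ∉ T := fun h => lt_irrefl v (hlt v h)
    obtain ⟨hv, hvk⟩ := hT v (Finset.mem_insert_self v T)
    have havk : a ≠ v + k := (haT v (Finset.mem_insert_self v T)).symm
    rw [card_isLinkedArrangement_insert hk hlt hv hvk havk, ih _ (Finset.mem_erase.2 ⟨havk, ha⟩)
      (fun t ht => haT t (Finset.mem_insert_of_mem ht)), Finset.card_erase_of_mem hvk,
      Finset.card_insert_of_notMem hvT]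
    · congr 1; omega
    · intro t ht
      have := hlt t ht
      obtain ⟨h1, h2⟩ := hT t (Finset.mem_insert_of_mem ht)
      exact ⟨Finset.mem_erase.2 ⟨by omega, h1⟩, Finset.mem_erase.2 ⟨by omega, h2⟩⟩

theorem card_subtype_eq_card_mul_card_subtype_apply_zero {G β : Type*} [AddGroup G]
    (P : (G ≃ β) → Prop) (hP : ∀ p c, P p → P ((Equiv.addRight c).trans p)) (b : β) :
    Nat.card {p // P p} = Nat.card G * Nat.card {p // P p ∧ p 0 = b} := by
  rw [← Nat.card_prod]
  refine Nat.card_congr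
    { toFun := fun p => (p.1.symm b, ⟨(Equiv.addRight (p.1.symm b)).trans p.1, hP _ _ p.2, by simp⟩)
      invFun := fun cp => ⟨(Equiv.addRight (-cp.1)).trans cp.2.1, hP _ _ cp.2.2.1⟩
      left_inv := fun p => by ext u; simp
      right_inv := fun ⟨c, p, hp, hb⟩ => by
        have : p.symm b = 0 := by rw [← hb, Equiv.symm_apply_apply]
        ext u <;> simp [this] }

def IsCyclicallyLinked {n : ℕ} (k : ℕ) (T : Finset ℕ) (p : Perm (Fin (n + 1))) : Prop :=
  ∀ u, (p u : ℕ) ∈ T → (p (u + 1) : ℕ) = p u + k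

theorem IsCyclicallyLinked.addRight {n k : ℕ} {T : Finset ℕ} {p : Perm (Fin (n + 1))}
    (hp : IsCyclicallyLinked k T p) (c : Fin (n + 1)) :
    IsCyclicallyLinked k T ((Equiv.addRight c).trans p) := by
  intro u hu
  simpa [add_right_comm u 1 c] using hp (u + c) hu

theorem nodup_ofFn_val_perm {n : ℕ} (p : Perm (Fin n)) : (List.ofFn fun i => (p i : ℕ)).Nodup :=
  List.nodup_ofFn.2 (Fin.val_injective.comp p.injective)

theorem toFinset_ofFn_val_perm {n : ℕ} (p : Perm (Fin n)) :
    (List.ofFn fun i => (p i : ℕ)).toFinset = range n := by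
  ext x
  simpa using ⟨fun ⟨i, hi⟩ => hi ▸ (p i).isLt, fun hx => ⟨p.symm ⟨x, hx⟩, by simp⟩⟩

theorem bijective_ofFn_val_perm (n : ℕ) :
    Function.Bijective fun p : Perm (Fin n) =>
      (⟨List.ofFn fun i => (p i : ℕ), nodup_ofFn_val_perm p, toFinset_ofFn_val_perm p⟩ :
        {l : List ℕ // l.Nodup ∧ l.toFinset = range n}) := by
  have hcard : Nat.card {l : List ℕ // l.Nodup ∧ l.toFinset = range n} = n ! := by
    rw [card_nodup_list_toFinset_eq, card_range]
  have : Finite {l : List ℕ // l.Nodup ∧ l.toFinset = range n} :=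
    Nat.finite_of_card_ne_zero (hcard ▸ (factorial_pos n).ne')
  refine Function.Injective.bijective_of_nat_card_le (fun p q h => ?_)
    (by rw [hcard, Nat.card_perm, Nat.card_fin])
  ext i
  exact congrFun (List.ofFn_injective (congrArg Subtype.val h)) i

theorem isLinkedArrangement_ofFn_iff {n k : ℕ} (hk : 1 ≤ k) {T : Finset ℕ}
    (hT : ∀ t ∈ T, t + k < n + 1) (p : Perm (Fin (n + 1))) :
    IsLinkedArrangement k (range (n + 1)) T 0 (List.ofFn fun i => (p i : ℕ)) ↔
      IsCyclicallyLinked k T p ∧ p 0 = 0 := by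
  have hhead : (List.ofFn fun i => (p i : ℕ)).head? = some (p 0 : ℕ) := by simp [List.ofFn_succ]
  simp only [IsLinkedArrangement, nodup_ofFn_val_perm, toFinset_ofFn_val_perm, hhead,
    Option.some.injEq, Fin.val_eq_zero_iff, List.pair_infix_ofFn_iff, true_and]
  rw [and_comm, and_congr_left_iff]
  intro h0
  constructor
  · intro h u hu
    obtain ⟨i, hi, hiu, hik⟩ := h _ hu
    obtain rfl : u = ⟨i, Nat.lt_of_succ_lt hi⟩ := p.injective (Fin.ext hiu.symm)
    rwa [show (⟨i, _⟩ + 1 : Fin (n + 1)) = ⟨i + 1, hi⟩ from Fin.ext (Fin.val_add_one_of_lt' hi)]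
  · intro h t ht
    have htn : t < n + 1 := by have := hT t ht; omega
    set u := p.symm ⟨t, htn⟩
    have hu : (p u : ℕ) = t := by simp [u]
    have hsucc := h u (hu ▸ ht)
    by_cases hlast : u = Fin.last n
    · rw [hlast, Fin.last_add_one, h0] at hsucc
      simp at hsucc
      omega
    · have hlt : (u : ℕ) + 1 < n + 1 := Nat.succ_lt_succ (Fin.val_lt_last hlast)
      refine ⟨u, hlt, hu, ?_⟩
      rwa [← hu, show (⟨u + 1, hlt⟩ : Fin (n + 1)) = u + 1 from
        Fin.ext (Fin.val_add_one_of_lt' hlt).symm]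

theorem card_isCyclicallyLinked_apply_zero {n k : ℕ} (hk : 1 ≤ k) {T : Finset ℕ}
    (hT : ∀ t ∈ T, t + k < n + 1) :
    Nat.card {p : Perm (Fin (n + 1)) // IsCyclicallyLinked k T p ∧ p 0 = 0} = (n - T.card)! := by
  have hcount := card_isLinkedArrangement hk T (s := range (n + 1)) (a := 0)
    (fun t ht => by have := hT t ht; simp only [mem_range]; omega) (by simp)
    (fun t ht => by omega)
  rw [card_range, Nat.add_sub_cancel] at hcount
  rw [← hcount]
  have hbij := bijective_ofFn_val_perm (n + 1)
  refine Nat.card_eq_of_bijective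
    (fun p => ⟨_, (isLinkedArrangement_ofFn_iff hk hT p.1).2 p.2⟩)
    ⟨fun p q h => Subtype.ext (hbij.1 (Subtype.ext (congrArg Subtype.val h :))), ?_⟩
  · rintro ⟨l, hl⟩
    obtain ⟨p, hp⟩ := hbij.2 ⟨l, hl.1, hl.2.1⟩
    have hpl : (List.ofFn fun i => (p i : ℕ)) = l := congrArg Subtype.val hp
    exact ⟨⟨p, (isLinkedArrangement_ofFn_iff hk hT p).1 (hpl ▸ hl)⟩, Subtype.ext hpl⟩

theorem card_isCyclicallyLinked {n k : ℕ} (hk : 1 ≤ k) {T : Finset ℕ}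
    (hT : ∀ t ∈ T, t + k < n + 1) :
    Nat.card {p : Perm (Fin (n + 1)) // IsCyclicallyLinked k T p} = (n + 1) * (n - T.card)! := by
  rw [card_subtype_eq_card_mul_card_subtype_apply_zero _ (fun p c hp => hp.addRight c) 0,
    Nat.card_fin, card_isCyclicallyLinked_apply_zero hk hT]

theorem isCyclicallyLinked_iff_forall_singleton {n k : ℕ} {T : Finset ℕ} {p : Perm (Fin (n + 1))} :
    IsCyclicallyLinked k T p ↔ ∀ t ∈ T, IsCyclicallyLinked k {t} p := by
  simp only [IsCyclicallyLinked, mem_singleton]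
  exact ⟨fun h t ht u hu => h u (hu ▸ ht), fun h u hu => h _ hu u rfl⟩

theorem forall_not_isCyclicallyLinked_singleton_iff {n k : ℕ} (p : Perm (Fin (n + 1))) :
    (∀ t ∈ range (n + 1 - k), ¬IsCyclicallyLinked k {t} p) ↔ ∀ i, (p (i + 1) : ℕ) ≠ p i + k := by
  simp only [IsCyclicallyLinked, mem_singleton, mem_range, not_forall]
  constructor
  · intro h i hi
    obtain ⟨u, hu, hne⟩ := h (p i) (by have := (p (i + 1)).isLt; omega)
    exact hne (p.injective (Fin.ext hu) ▸ hi)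
  · intro h t ht
    exact ⟨p.symm ⟨t, by omega⟩, by simp, h _⟩

/-- The number of permutations of `{1,...,n}` avoiding circular `k`-successions
(positions cyclic, values not reduced mod n) equals
`n · ∑_{j=0}^{n-k} (-1)^j C(n-k,j) (n-1-j)!  (= n · d^{k-1}_{n-1})`. Values 0-indexed;
`finRotate n i = i + 1 (mod n)` gives the cyclically next position. -/
theorem dstar_k_n (n k : ℕ) (hk : 1 ≤ k) (hkn : k ≤ n - 1) :
    (Nat.card {p : Equiv.Perm (Fin n) //
        ∀ i : Fin n, ((p (finRotate n i)) : ℕ) ≠ (p i : ℕ) + k} : ℤ) =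
      (n : ℤ) * ∑ j ∈ Finset.range (n - k + 1),
        (-1 : ℤ) ^ j * (n - k).choose j * (n - 1 - j).factorial := by
  classical
  obtain ⟨m, rfl⟩ : ∃ m, n = m + 1 := ⟨n - 1, by omega⟩
  let S : ℕ → Finset (Perm (Fin (m + 1))) := fun t => {p | IsCyclicallyLinked k {t} p}
  have hS : ∀ T ⊆ range (m + 1 - k), (#(T.inf S) : ℤ) = (m + 1) * (m - #T)! := by
    intro T hT
    have : T.inf S = ({p | IsCyclicallyLinked k T p} : Finset (Perm (Fin (m + 1)))) := by
      ext p
      simp [S, mem_inf, isCyclicallyLinked_iff_forall_singleton (T := T)]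
    rw [this, ← Fintype.card_subtype, ← Nat.card_eq_fintype_card,
      card_isCyclicallyLinked hk fun t ht => by have := mem_range.1 (hT ht); omega]
    push_cast
    ring
  have hcompl : (range (m + 1 - k)).inf (fun t => (S t)ᶜ) =
      ({p | ∀ i, (p (finRotate (m + 1) i) : ℕ) ≠ p i + k} : Finset (Perm (Fin (m + 1)))) := by
    ext p
    simp only [S, mem_inf, mem_compl, mem_filter, mem_univ, true_and, finRotate_apply]
    exact forall_not_isCyclicallyLinked_singleton_iff p
  rw [Nat.card_eq_fintype_card, Fintype.card_subtype, ← hcompl,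
    inclusion_exclusion_card_inf_compl,
    sum_congr rfl fun T hT => by rw [hS T (mem_powerset.1 hT)],
    sum_powerset_apply_card (fun j => (-1 : ℤ) ^ j * ((m + 1) * (m - j)! : ℤ)), card_range,
    mul_sum]
  refine sum_congr rfl fun j _ => ?_
  simp only [nsmul_eq_mul, Nat.add_sub_cancel]
  push_cast
  ring
end

section
/- For fixed k with 1 ≤ k ≤ n-1, the number of cyclic (circular) permutations of {1,...,n} that avoid all substrings j(j+k) with 1 ≤ j ≤ n-k equals Σ_{j=0}^{n-k} (-1)^j · C(n-k, j) · (n-j-1)!. -/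
/-!
Inclusion–exclusion over the set `t` of forbidden arcs `j ↦ j + k` that a circular permutation
is required to contain reduces the theorem to counting circular permutations of `[n]` through
`|t|` prescribed arcs. These arcs form disjoint paths (the values increase along them), and
contracting an arc `a ↦ b` whose head `b` starts no other arc — delete `b` from the cycle —
is a bijection onto circular permutations of `n - 1` points through the remaining `|t| - 1` arcs.
So the count is that of all circular permutations of `n - |t|` points, `(n - |t| - 1)!`.
-/

open Finset

namespace Equiv.Perm

variable {α β : Type*}

def IsCircular (σ : Perm α) : Prop := ∀ x y, ∃ m : ℕ, (σ ^ m) x = y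

theorem isCircular_iff_forall_mapsTo {σ : Perm α} :
    σ.IsCircular ↔ ∀ s : Set α, s.MapsTo σ s → s.Nonempty → s = .univ := by
  refine ⟨fun hσ s hs ⟨x, hx⟩ => Set.eq_univ_of_forall fun y => ?_, fun h x y => ?_⟩
  · obtain ⟨m, rfl⟩ := hσ x y
    rw [coe_pow]
    exact hs.iterate m hx
  · have hmaps : Set.MapsTo σ {y | ∃ m : ℕ, (σ ^ m) x = y} {y | ∃ m : ℕ, (σ ^ m) x = y} := by
      rintro _ ⟨m, rfl⟩
      exact ⟨m + 1, by rw [pow_succ', mul_apply]⟩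
    exact Set.eq_univ_iff_forall.1 (h _ hmaps ⟨x, 0, rfl⟩) y

theorem isCircular_permCongr (ε : α ≃ β) {σ : Perm α} :
    (ε.permCongr σ).IsCircular ↔ σ.IsCircular := by
  have hpow (m : ℕ) : ε.permCongr σ ^ m = ε.permCongr (σ ^ m) := (map_pow ε.permCongrHom σ m).symm
  simp only [IsCircular, hpow, permCongr_apply, ε.forall_congr_left, ← ε.eq_symm_apply]

theorem isCircular_iff_cycleType [Fintype α] [DecidableEq α] (hα : 2 ≤ Fintype.card α)
    {σ : Perm α} : σ.IsCircular ↔ σ.cycleType = {Fintype.card α} := by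
  constructor
  · intro hσ
    have hmoved (x : α) : σ x ≠ x := by
      intro hx
      obtain ⟨y, hy⟩ := Fintype.exists_ne_of_one_lt_card hα x
      obtain ⟨m, hm⟩ := hσ x y
      exact hy (hm ▸ pow_apply_eq_self_of_apply_eq_self hx m)
    have hsupp : σ.support = univ := eq_univ_of_forall fun x => mem_support.2 (hmoved x)
    obtain ⟨x⟩ : Nonempty α := Fintype.card_pos_iff.1 (by omega)
    have hcycle : σ.IsCycle := (isCycle_iff_sameCycle (hmoved x)).2 fun {y} =>
      iff_of_true (let ⟨m, hm⟩ := hσ x y; ⟨m, by rwa [zpow_natCast]⟩) (hmoved y)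
    rw [hcycle.cycleType, hsupp, card_univ]
  · intro hσ x y
    have hcycle : σ.IsCycle := card_cycleType_eq_one.1 (by rw [hσ]; rfl)
    have hsupp : σ.support = univ := eq_univ_of_card _ (by
      rw [← sum_cycleType, hσ, Multiset.sum_singleton])
    exact (hcycle.sameCycle (mem_support.1 (hsupp ▸ mem_univ x))
      (mem_support.1 (hsupp ▸ mem_univ y))).exists_nat_pow_eq

theorem card_isCircular [Fintype α] [DecidableEq α] :
    Nat.card {σ : Perm α // σ.IsCircular} = (Fintype.card α - 1).factorial := by
  by_cases hα : 2 ≤ Fintype.card α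
  · rw [Nat.card_congr (subtypeEquivRight fun σ => isCircular_iff_cycleType hα),
      Nat.card_eq_fintype_card, Fintype.card_subtype, card_of_cycleType_singleton hα le_rfl,
      Nat.choose_self, mul_one]
  · have : Subsingleton α := Fintype.card_le_one_iff_subsingleton.1 (by omega)
    have hall (σ : Perm α) : σ.IsCircular := fun x y => ⟨0, Subsingleton.elim _ _⟩
    rw [Nat.card_congr (subtypeUnivEquiv hall), Nat.card_perm, Nat.card_eq_fintype_card]
    interval_cases Fintype.card α <;> rfl

theorem some_removeNone_eq_or (σ : Perm (Option β)) (x : β) :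
    some (removeNone σ x) = σ (some x) ∨ σ (some x) = none ∧ some (removeNone σ x) = σ none := by
  cases h : σ (some x) with
  | none => exact .inr ⟨rfl, removeNone_none σ h⟩
  | some y => exact .inl (h ▸ removeNone_some σ ⟨y, h⟩)

theorem some_removeNone_of_ne {σ : Perm (Option β)} {a x : β} (ha : σ (some a) = none)
    (hx : x ≠ a) : some (removeNone σ x) = σ (some x) :=
  ((some_removeNone_eq_or σ x).resolve_right fun h =>
    hx (Option.some_injective _ (σ.injective (h.1.trans ha.symm))))

theorem isCircular_removeNone {σ : Perm (Option β)} (hσ : σ.IsCircular) :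
    IsCircular (removeNone σ) := by
  rw [isCircular_iff_forall_mapsTo] at hσ ⊢
  rintro s hs ⟨x, hx⟩
  -- `none` joins `s` exactly when its predecessor lies in `s`
  let s' : Set (Option β) := some '' s ∪ {u | u = none ∧ ∃ x ∈ s, σ (some x) = none}
  have hs' : s'.MapsTo σ s' := by
    rintro _ (⟨x, hx, rfl⟩ | ⟨rfl, x, hx, hxn⟩)
    · rcases some_removeNone_eq_or σ x with h | ⟨h, -⟩
      · exact .inl ⟨_, hs hx, h⟩
      · exact .inr ⟨h, x, hx, h⟩
    · exact .inl ⟨_, hs hx, removeNone_none σ hxn⟩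
  have := hσ s' hs' ⟨some x, .inl ⟨x, hx, rfl⟩⟩
  refine Set.eq_univ_of_forall fun y => ?_
  simpa [s'] using Set.eq_univ_iff_forall.1 this (some y)

theorem isCircular_of_removeNone {σ : Perm (Option β)} {a : β} (ha : σ (some a) = none)
    (hσ : IsCircular (removeNone σ)) : σ.IsCircular := by
  rw [isCircular_iff_forall_mapsTo] at hσ ⊢
  rintro s hs ⟨u, hu⟩
  have hmaps : Set.MapsTo (removeNone σ) {x | some x ∈ s} {x | some x ∈ s} := by
    intro x (hx : some x ∈ s)
    show some _ ∈ s
    rcases some_removeNone_eq_or σ x with h | ⟨h, h'⟩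
    · exact h ▸ hs hx
    · exact h' ▸ hs (h ▸ hs hx)
  have hne : {x | some x ∈ s}.Nonempty := by
    cases u with
    | none => exact ⟨_, (removeNone_none σ ha).symm ▸ hs hu⟩
    | some x => exact ⟨x, hu⟩
  have hsome := Set.eq_univ_iff_forall.1 (hσ _ hmaps hne)
  refine Set.eq_univ_of_forall fun u => ?_
  cases u with
  | none => exact ha ▸ hs (hsome a)
  | some x => exact hsome x

section insertNone

variable [DecidableEq β]

def insertNoneAfter (a : β) (e : Perm β) : Perm (Option β) :=
  e.optionCongr * swap (some a) none

theorem insertNoneAfter_some_of_ne {a x : β} (e : Perm β) (hx : x ≠ a) :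
    insertNoneAfter a e (some x) = some (e x) := by
  simp [insertNoneAfter, swap_apply_of_ne_of_ne (Option.some_injective _ |>.ne hx)]

@[simp]
theorem insertNoneAfter_some_self (a : β) (e : Perm β) : insertNoneAfter a e (some a) = none := by
  simp [insertNoneAfter]

@[simp]
theorem insertNoneAfter_none (a : β) (e : Perm β) : insertNoneAfter a e none = some (e a) := by
  simp [insertNoneAfter]

theorem removeNone_insertNoneAfter (a : β) (e : Perm β) : removeNone (insertNoneAfter a e) = e := by
  ext x
  by_cases hx : x = a
  · subst hx
    exact Option.some_injective _
      ((removeNone_none _ (insertNoneAfter_some_self x e)).trans (insertNoneAfter_none x e))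
  · exact Option.some_injective _
      ((some_removeNone_of_ne (insertNoneAfter_some_self a e) hx).trans
        (insertNoneAfter_some_of_ne e hx))

theorem insertNoneAfter_removeNone {σ : Perm (Option β)} {a : β} (ha : σ (some a) = none) :
    insertNoneAfter a (removeNone σ) = σ := by
  ext1 u
  rcases u with _ | x
  · rw [insertNoneAfter_none, removeNone_none σ ha]
  · by_cases hx : x = a
    · rw [hx, insertNoneAfter_some_self, ha]
    · rw [insertNoneAfter_some_of_ne _ hx, some_removeNone_of_ne ha hx]

def removeNoneCircularEquiv (a : β) (T : Finset β) (g : β → β) (haT : a ∉ T) :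
    {σ : Perm (Option β) // σ.IsCircular ∧ σ (some a) = none ∧
      ∀ c ∈ T, σ (some c) = some (g c)} ≃
    {e : Perm β // e.IsCircular ∧ ∀ c ∈ T, e c = g c} where
  toFun σ := ⟨removeNone σ.1, isCircular_removeNone σ.2.1, fun c hc => Option.some_injective _ <| by
    rw [some_removeNone_of_ne σ.2.2.1 (ne_of_mem_of_not_mem hc haT), σ.2.2.2 c hc]⟩
  invFun e := ⟨insertNoneAfter a e.1,
    isCircular_of_removeNone (insertNoneAfter_some_self a e) <| by
      rw [removeNone_insertNoneAfter]; exact e.2.1,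
    insertNoneAfter_some_self a e, fun c hc => by
      rw [insertNoneAfter_some_of_ne _ (ne_of_mem_of_not_mem hc haT), e.2.2 c hc]⟩
  left_inv σ := Subtype.ext (insertNoneAfter_removeNone σ.2.2.1)
  right_inv e := Subtype.ext (removeNone_insertNoneAfter a e)

end insertNone

theorem permCongr_optionSubtypeNe_apply_coe [DecidableEq α] {b : α}
    (τ : Perm (Option {x // x ≠ b})) (c : {x // x ≠ b}) :
    (optionSubtypeNe b).permCongr τ c = optionSubtypeNe b (τ (some c)) := by
  rw [permCongr_apply, optionSubtypeNe_symm_of_ne c.2]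

/-- Deletes `b` from the cycle of `σ`, so that `a` is sent to the old `σ b`. -/
def contractCircularEquiv [DecidableEq α] {a b : α} (hab : a ≠ b) {T : Finset α} (haT : a ∉ T)
    (hbT : b ∉ T) (g : α → α) (g' : {x // x ≠ b} → {x // x ≠ b})
    (hg' : ∀ c : {x // x ≠ b}, ↑c ∈ T → ↑(g' c) = g c) :
    {σ : Perm α // σ.IsCircular ∧ σ a = b ∧ ∀ c ∈ T, σ c = g c} ≃
    {e : Perm {x // x ≠ b} // e.IsCircular ∧ ∀ c ∈ T.subtype (· ≠ b), e c = g' c} :=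
  let ε := optionSubtypeNe b
  have key (τ : Perm (Option {x // x ≠ b})) :
      (τ.IsCircular ∧ τ (some ⟨a, hab⟩) = none ∧
        ∀ c ∈ T.subtype (· ≠ b), τ (some c) = some (g' c)) ↔
      ((ε.permCongr τ).IsCircular ∧ ε.permCongr τ a = b ∧ ∀ c ∈ T, ε.permCongr τ c = g c) := by
    refine and_congr (isCircular_permCongr ε).symm
      (and_congr ?_ ⟨fun h c hc => ?_, fun h c hc => ?_⟩)
    · rw [permCongr_optionSubtypeNe_apply_coe τ ⟨a, hab⟩, ← ε.eq_symm_apply,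
        optionSubtypeNe_symm_self]
    · have hcb : c ≠ b := ne_of_mem_of_not_mem hc hbT
      rw [permCongr_optionSubtypeNe_apply_coe τ ⟨c, hcb⟩, h _ (mem_subtype.2 hc)]
      exact hg' ⟨c, hcb⟩ hc
    · rw [mem_subtype] at hc
      apply ε.injective
      rw [← permCongr_optionSubtypeNe_apply_coe, h _ hc]
      exact (hg' c hc).symm
  (subtypeEquiv ε.permCongr key).symm.trans
    (removeNoneCircularEquiv ⟨a, hab⟩ (T.subtype (· ≠ b)) g' (by simpa using haT))

theorem card_isCircular_extending [Fintype α] [DecidableEq α] {ι : Type*} [LinearOrder ι]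
    {S : Finset α} {g : α → α} (hg : Set.InjOn g S) (r : α → ι) (hr : ∀ c ∈ S, r c < r (g c)) :
    Nat.card {σ : Perm α // σ.IsCircular ∧ ∀ c ∈ S, σ c = g c} =
      (Fintype.card α - #S - 1).factorial := by
  obtain ⟨m, hm⟩ : ∃ m, #S = m := ⟨_, rfl⟩
  induction m generalizing α with
  | zero =>
    rw [card_eq_zero.1 hm, card_empty, Nat.sub_zero, ← card_isCircular]
    exact Nat.card_congr (subtypeEquivRight fun σ => by simp)
  | succ m ih =>
    -- with `r (g a)` maximal, `b = g a` has no prescribed image, so the arc `a ↦ b` contracts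
    obtain ⟨a, haS, hamax⟩ := S.exists_max_image (r ∘ g) (card_pos.1 (by omega))
    set b := g a
    have hab : a ≠ b := fun h => (hr a haS).ne (congrArg r h)
    have hbS : b ∉ S := fun hb => (hamax b hb).not_gt (hr b hb)
    have hbT : b ∉ S.erase a := fun hb => hbS (mem_of_mem_erase hb)
    let g' (x : {x // x ≠ b}) : {x // x ≠ b} := if h : g x = b then x else ⟨g x, h⟩
    have hg' (c : {x // x ≠ b}) (hc : ↑c ∈ S.erase a) : ↑(g' c) = g c := by
      have hcb : g c ≠ b := fun h => (ne_of_mem_erase hc) (hg (mem_of_mem_erase hc) haS h)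
      simp [g', hcb]
    have hsplit (σ : Perm α) : (σ.IsCircular ∧ ∀ c ∈ S, σ c = g c) ↔
        (σ.IsCircular ∧ σ a = b ∧ ∀ c ∈ S.erase a, σ c = g c) := by
      rw [← insert_erase haS, forall_mem_insert, erase_insert (notMem_erase a S)]
    have hcard : #((S.erase a).subtype (· ≠ b)) = m := by
      rw [card_subtype, filter_true_of_mem fun c hc => ne_of_mem_of_not_mem hc hbT,
        card_erase_of_mem haS, hm, Nat.add_sub_cancel]
    have hα : Fintype.card {x // x ≠ b} = Fintype.card α - 1 := by
      simp [Fintype.card_subtype_compl]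
    rw [Nat.card_congr ((subtypeEquivRight hsplit).trans
        (contractCircularEquiv hab (notMem_erase a S) hbT g g' hg')),
      ih (g := g') ?_ (r ∘ (↑)) ?_ hcard, hα, hm]
    · congr 1
      omega
    · intro c hc d hd hcd
      rw [mem_coe, mem_subtype] at hc hd
      refine Subtype.ext (hg (mem_of_mem_erase hc) (mem_of_mem_erase hd) ?_)
      rw [← hg' c hc, ← hg' d hd, hcd]
    · intro c hc
      rw [mem_subtype] at hc
      simpa [hg' c hc] using hr c (mem_of_mem_erase hc)

theorem card_isCircular_and_eq_card_filter [Fintype α] [DecidableEq α] (P : Perm α → Prop)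
    [DecidablePred P] [DecidablePred (IsCircular : Perm α → Prop)] :
    Nat.card {σ : Perm α // σ.IsCircular ∧ P σ} = #{σ : {σ : Perm α // σ.IsCircular} | P σ} := by
  rw [← Nat.card_congr (subtypeSubtypeEquivSubtypeInter _ _), Nat.card_eq_fintype_card,
    Fintype.card_subtype]

theorem card_isCircular_avoiding [Fintype α] [DecidableEq α] {ι : Type*} [LinearOrder ι]
    {F : Finset α} {g : α → α} (hg : Set.InjOn g F) (r : α → ι) (hr : ∀ c ∈ F, r c < r (g c)) :
    (Nat.card {σ : Perm α // σ.IsCircular ∧ ∀ c ∈ F, σ c ≠ g c} : ℤ) =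
      ∑ j ∈ range (#F + 1),
        (-1) ^ j * ((#F).choose j : ℤ) * (Fintype.card α - j - 1).factorial := by
  classical
  let A (c : α) : Finset {σ : Perm α // σ.IsCircular} := {σ | σ.1 c = g c}
  have hcount (t : Finset α) (ht : t ∈ F.powerset) :
      #(t.inf A) = (Fintype.card α - #t - 1).factorial := by
    rw [mem_powerset] at ht
    rw [← card_isCircular_extending (hg.mono ht) r (fun c hc => hr c (ht hc)),
      card_isCircular_and_eq_card_filter]
    congr 1
    ext σ
    simp [A, mem_inf]
  calc (Nat.card {σ : Perm α // σ.IsCircular ∧ ∀ c ∈ F, σ c ≠ g c} : ℤ)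
      = #(F.inf fun c => (A c)ᶜ) := by
        rw [card_isCircular_and_eq_card_filter]
        congr 2
        ext σ
        simp [A, mem_inf]
    _ = ∑ t ∈ F.powerset, (-1) ^ #t * ((Fintype.card α - #t - 1).factorial : ℤ) := by
        rw [inclusion_exclusion_card_inf_compl]
        exact sum_congr rfl fun t ht => by rw [hcount t ht]
    _ = _ := by
        rw [sum_powerset_apply_card fun j =>
          (-1 : ℤ) ^ j * ((Fintype.card α - j - 1).factorial : ℤ)]
        exact sum_congr rfl fun j _ => by rw [nsmul_eq_mul]; ring

end Equiv.Perm

theorem cstar_k_n_general (n k : ℕ) (hk : 1 ≤ k) :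
    (Nat.card {σ : Equiv.Perm (Fin n) //
        (∀ a b : Fin n, ∃ m : ℕ, (σ ^ m) a = b) ∧
        ∀ a : Fin n, ((σ a : ℕ)) ≠ (a : ℕ) + k} : ℤ) =
      ∑ j ∈ Finset.range (n - k + 1),
        (-1 : ℤ) ^ j * (n - k).choose j * (n - j - 1).factorial := by
  let F : Finset (Fin n) := {a | (a : ℕ) < n - k}
  let g (a : Fin n) : Fin n := ⟨(a + k) % n, Nat.mod_lt _ a.pos⟩
  have hg (a : Fin n) (ha : a ∈ F) : (g a : ℕ) = a + k :=
    Nat.mod_eq_of_lt (by simp only [F, mem_filter] at ha; omega)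
  have hF : #F = n - k := by
    rw [Fin.card_filter_val_lt]
    omega
  have havoid (σ : Equiv.Perm (Fin n)) :
      (∀ a : Fin n, (σ a : ℕ) ≠ a + k) ↔ ∀ a ∈ F, σ a ≠ g a := by
    refine ⟨fun h a ha hσa => h a (by rw [hσa, hg a ha]), fun h a hσa => ?_⟩
    have ha : a ∈ F := by simp only [F, mem_filter, mem_univ, true_and]; omega
    exact h a ha (Fin.ext (by rw [hσa, hg a ha]))
  have hinj : Set.InjOn g F := fun a ha b hb hab =>
    Fin.ext (by simpa [hg a ha, hg b hb] using congrArg Fin.val hab)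
  have hr (a : Fin n) (ha : a ∈ F) : (a : ℕ) < g a := by
    rw [hg a ha]
    omega
  change (Nat.card {σ : Equiv.Perm (Fin n) // σ.IsCircular ∧ _} : ℤ) = _
  rw [Nat.card_congr (Equiv.subtypeEquivRight fun σ => and_congr Iff.rfl (havoid σ)),
    Equiv.Perm.card_isCircular_avoiding hinj Fin.val hr, hF, Fintype.card_fin]

/-- The number of cyclic permutations of `{1,...,n}` (single-orbit permutations `σ`,
where "`b` immediately follows `a`" means `σ a = b`) avoiding all substrings `j(j+k)`,
`1 ≤ j ≤ n-k`, equals `∑_{j=0}^{n-k} (-1)^j C(n-k,j) (n-j-1)!`. Values 0-indexed. -/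
theorem cstar_k_n (n k : ℕ) (hk : 1 ≤ k) (hkn : k ≤ n - 1) :
    (Nat.card {σ : Equiv.Perm (Fin n) //
        (∀ a b : Fin n, ∃ m : ℕ, (σ ^ m) a = b) ∧
        ∀ a : Fin n, ((σ a : ℕ)) ≠ (a : ℕ) + k} : ℤ) =
      ∑ j ∈ Finset.range (n - k + 1),
        (-1 : ℤ) ^ j * (n - k).choose j * (n - j - 1).factorial :=
  cstar_k_n_general n k hk
end

section
/- The number of cyclic permutations of {1,...,n} that avoid all substrings j(j+1) for 1 ≤ j ≤ n-1 equals D_{n-1}, the (n-1)st derangement number. -/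
/-!
Inclusion–exclusion over the `n - 1` forbidden substrings `j (j+1)`. A circular permutation of
`n` letters containing `k` prescribed substrings `j (j+1)` is the same as a circular permutation
of the `n - k` letters obtained by gluing each such pair into one letter, and there are
`(n - k - 1)!` of those; hence the count is `∑ₖ (-1)^k C(n-1, k) (n-1-k)! = D_{n-1}`.
Gluing is done one pair `x ↦ y` at a time by passing from `σ` to `σ * swap x y`, which fixes `y`
and cuts it out of the cycle of `σ`; taking a pair whose `y` starts no other prescribed pair leaves
the remaining prescriptions untouched.
-/

open Finset
open scoped Nat

namespace Equiv.Perm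

variable {α : Type*} {σ : Perm α} {S : Finset α} {x y b : α}

def IsCircularOn (σ : Perm α) (S : Finset α) : Prop :=
  (∀ z ∉ S, σ z = z) ∧ ∀ a ∈ S, ∀ b ∈ S, σ.SameCycle a b

theorem SameCycle.mem_of_mapsTo [Finite α] {C : Set α}
    (h : σ.SameCycle x b) (hx : x ∈ C) (hC : Set.MapsTo σ C C) : b ∈ C := by
  obtain ⟨m, rfl⟩ := h.exists_nat_pow_eq
  rw [coe_pow]
  exact hC.iterate m hx

theorem isCircularOn_iff_forall_sameCycle (hx : x ∈ S) :
    σ.IsCircularOn S ↔ (∀ z ∉ S, σ z = z) ∧ ∀ b ∈ S, σ.SameCycle x b :=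
  and_congr_right fun _ =>
    ⟨fun h => h x hx, fun h a ha b hb => (h a ha).symm.trans (h b hb)⟩

theorem IsCircularOn.apply_ne (h : σ.IsCircularOn S) (hS : 1 < #S) (hy : y ∈ S) : σ y ≠ y := by
  obtain ⟨b, hb, hby⟩ := exists_mem_ne hS y
  exact fun hfix => hby ((h.2 y hy b hb).eq_of_left hfix).symm

theorem isCircularOn_iff_eq_one (hS : #S ≤ 1) :
    σ.IsCircularOn S ↔ σ = 1 := by
  refine ⟨fun h => Equiv.ext fun z => ?_, ?_⟩
  · by_contra hz
    have hzS : z ∈ S := by_contra fun hzS => hz (h.1 z hzS)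
    have hσzS : σ z ∈ S := by_contra fun hσzS => hz (σ.injective (h.1 _ hσzS))
    exact hz (card_le_one.1 hS _ hσzS _ hzS)
  · rintro rfl
    exact ⟨fun _ _ => rfl, fun a ha b hb => card_le_one.1 hS a ha b hb ▸ SameCycle.refl _ _⟩

section

variable [DecidableEq α]

theorem sameCycle_mul_swap_iff [Finite α] (h : σ x = y) (hb : b ≠ y) :
    (σ * swap x y).SameCycle x b ↔ σ.SameCycle x b := by
  have hxy : σ.SameCycle x y := ⟨1, by simp [h]⟩
  constructor
  · refine fun hb' => hb'.mem_of_mapsTo (C := {c | σ.SameCycle x c}) (SameCycle.refl _ _) ?_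
    intro c hc
    have : σ.SameCycle x (swap x y c) := by
      rw [swap_apply_def]
      split_ifs
      exacts [hxy, SameCycle.refl _ _, hc]
    exact sameCycle_apply_right.2 this
  · -- the `σ * swap x y`-cycle of `x`, together with `y`, is closed under `σ`
    set τ := σ * swap x y with hτ
    refine fun hb' => ((hb'.mem_of_mapsTo (C := {c | c = y ∨ τ.SameCycle x c})
      (Or.inr (SameCycle.refl _ _)) ?_).resolve_left hb)
    have hσ : ∀ c, σ c = τ (swap x y c) := fun c => by simp [hτ]
    intro c hc
    by_cases hcy : c = y
    · rw [hcy, hσ, swap_apply_right]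
      exact Or.inr (sameCycle_apply_right.2 (SameCycle.refl _ _))
    by_cases hcx : c = x
    · exact Or.inl (hcx ▸ h)
    · rw [hσ, swap_apply_of_ne_of_ne hcx hcy]
      exact Or.inr (sameCycle_apply_right.2 (hc.resolve_left hcy))

theorem isCircularOn_mul_swap_iff [Finite α] (h : σ x = y) (hxy : x ≠ y) (hx : x ∈ S) (hy : y ∈ S) :
    (σ * swap x y).IsCircularOn (S.erase y) ↔ σ.IsCircularOn S := by
  rw [isCircularOn_iff_forall_sameCycle (mem_erase.2 ⟨hxy, hx⟩),
    isCircularOn_iff_forall_sameCycle hx]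
  have hfix : ∀ z ∉ S, (σ * swap x y) z = σ z := fun z hz => by
    rw [mul_apply, swap_apply_of_ne_of_ne (ne_of_mem_of_not_mem hx hz).symm
      (ne_of_mem_of_not_mem hy hz).symm]
  have hxy' : σ.SameCycle x y := ⟨1, by simp [h]⟩
  apply and_congr
  · constructor
    · intro h' z hz
      rw [← hfix z hz]
      exact h' z (fun hz' => hz (mem_of_mem_erase hz'))
    · intro h' z hz
      by_cases hzy : z = y
      · simp [hzy, h]
      · have hzS : z ∉ S := fun hzS => hz (mem_erase.2 ⟨hzy, hzS⟩)
        rw [hfix z hzS, h' z hzS]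
  · constructor
    · intro h' b hb
      by_cases hby : b = y
      · exact hby ▸ hxy'
      · exact (sameCycle_mul_swap_iff h hby).1 (h' b (mem_erase.2 ⟨hby, hb⟩))
    · intro h' b hb
      exact (sameCycle_mul_swap_iff h (ne_of_mem_erase hb)).2 (h' b (mem_of_mem_erase hb))

theorem card_isCircularOn_forall_apply_eq_erase [Finite α] {t : Finset α} {s : α → α}
    (hx : x ∈ t) (hsx : s x ∉ t) (hxS : x ∈ S) (hsxS : s x ∈ S) :
    Nat.card {σ : Perm α // σ.IsCircularOn S ∧ ∀ a ∈ t, σ a = s a} =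
      Nat.card {σ : Perm α // σ.IsCircularOn (S.erase (s x)) ∧ ∀ a ∈ t.erase x, σ a = s a} := by
  set y := s x
  have hxy : x ≠ y := fun e => hsx (e ▸ hx)
  refine Nat.card_congr ((Equiv.mulRight (swap x y)).subtypeEquiv fun σ => ?_)
  have hne : ∀ a ∈ t, a ≠ x → (σ * swap x y) a = σ a := fun a ha hax => by
    rw [mul_apply, swap_apply_of_ne_of_ne hax (ne_of_mem_of_not_mem ha hsx)]
  simp only [coe_mulRight]
  constructor
  · rintro ⟨hcirc, harcs⟩
    refine ⟨(isCircularOn_mul_swap_iff (harcs x hx) hxy hxS hsxS).2 hcirc, fun a ha => ?_⟩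
    rw [hne a (mem_of_mem_erase ha) (ne_of_mem_erase ha), harcs a (mem_of_mem_erase ha)]
  · rintro ⟨hcirc, harcs⟩
    have h : σ x = y := by simpa using hcirc.1 y (notMem_erase y S)
    refine ⟨(isCircularOn_mul_swap_iff h hxy hxS hsxS).1 hcirc, fun a ha => ?_⟩
    by_cases hax : a = x
    · rw [hax, h]
    · rw [← hne a ha hax, harcs a (mem_erase.2 ⟨hax, ha⟩)]

theorem card_isCircularOn_eq_sum_card_apply_eq [Fintype α] (hS : 1 < #S) (hy : y ∈ S) :
    Nat.card {σ : Perm α // σ.IsCircularOn S} =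
      ∑ x ∈ S.erase y, Nat.card {σ : Perm α // σ.IsCircularOn S ∧ σ x = y} := by
  classical
  rw [Nat.card_eq_fintype_card, Fintype.card_subtype,
    card_eq_sum_card_fiberwise (f := fun σ => σ⁻¹ y) (t := S.erase y) fun σ hσ => ?_]
  · refine sum_congr rfl fun x _ => ?_
    rw [filter_filter, ← Fintype.card_subtype, ← Nat.card_eq_fintype_card]
    exact Nat.card_congr (subtypeEquivRight fun σ => by simp [Equiv.eq_symm_apply, eq_comm])
  · replace hσ : σ.IsCircularOn S := by simpa using hσ
    have hne : σ⁻¹ y ≠ y := fun h => hσ.apply_ne hS hy (inv_eq_iff_eq.1 h).symm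
    exact mem_erase.2 ⟨hne, by_contra fun h => hne (by simpa using (hσ.1 _ h).symm)⟩

end

theorem card_isCircularOn [Finite α] (S : Finset α) :
    Nat.card {σ : Perm α // σ.IsCircularOn S} = (#S - 1)! := by
  classical
  have := Fintype.ofFinite α
  induction S using Finset.strongInduction with
  | H S ih =>
  rcases le_or_gt #S 1 with hS | hS
  · rw [Nat.card_congr (Equiv.subtypeEquivRight fun σ => isCircularOn_iff_eq_one hS)]
    simp [Nat.sub_eq_zero_of_le hS]
  obtain ⟨y, hy⟩ := card_pos.1 (zero_lt_one.trans hS)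
  have hfiber : ∀ x ∈ S.erase y,
      Nat.card {σ : Perm α // σ.IsCircularOn S ∧ σ x = y} = (#S - 2)! := fun x hx => by
    have := card_isCircularOn_forall_apply_eq_erase (S := S) (s := fun _ => y)
      (mem_singleton_self x) (by simpa using (ne_of_mem_erase hx).symm) (mem_of_mem_erase hx) hy
    simp only [mem_singleton, forall_eq, erase_singleton, notMem_empty, IsEmpty.forall_iff,
      implies_true, and_true] at this
    rw [this, ih _ (erase_ssubset hy), card_erase_of_mem hy, Nat.sub_sub]
  obtain ⟨k, hk⟩ : ∃ k, #S = k + 2 := ⟨#S - 2, by omega⟩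
  rw [card_isCircularOn_eq_sum_card_apply_eq hS hy, sum_congr rfl hfiber]
  simp [hk, card_erase_of_mem hy, Nat.factorial_succ]

theorem card_isCircularOn_forall_apply_eq [Finite α] (r : α → ℕ) (S t : Finset α) (s : α → α)
    (hts : ∀ a ∈ t, a ∈ S ∧ s a ∈ S) (hinj : Set.InjOn s t) (hr : ∀ a ∈ t, r a < r (s a)) :
    Nat.card {σ : Perm α // σ.IsCircularOn S ∧ ∀ a ∈ t, σ a = s a} = (#S - 1 - #t)! := by
  classical
  induction t using Finset.strongInduction generalizing S with
  | H t ih =>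
  rcases t.eq_empty_or_nonempty with rfl | ht
  · simpa using card_isCircularOn S
  -- glue an arc `x ↦ s x` whose head `s x` has no prescribed successor
  obtain ⟨x, hx, hmax⟩ := exists_max_image t (fun a => r (s a)) ht
  have hsx : s x ∉ t := fun h => (hr _ h).not_ge (hmax _ h)
  have hts' : ∀ a ∈ t.erase x, a ∈ S.erase (s x) ∧ s a ∈ S.erase (s x) := fun a ha => by
    obtain ⟨hax, hat⟩ := mem_erase.1 ha
    exact ⟨mem_erase.2 ⟨ne_of_mem_of_not_mem hat hsx, (hts a hat).1⟩,
      mem_erase.2 ⟨fun h => hax (hinj hat hx h), (hts a hat).2⟩⟩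
  rw [card_isCircularOn_forall_apply_eq_erase hx hsx (hts x hx).1 (hts x hx).2,
    ih _ (erase_ssubset hx) _ hts' (hinj.mono (erase_subset x t))
      (fun a ha => hr a (mem_of_mem_erase ha)),
    card_erase_of_mem (hts x hx).2, card_erase_of_mem hx]
  have := card_pos.2 ht
  congr 1
  omega

theorem isCircularOn_univ_iff [Fintype α] :
    σ.IsCircularOn univ ↔ ∀ a b, ∃ m : ℕ, (σ ^ m) a = b := by
  simp only [IsCircularOn, mem_univ, not_true_eq_false, IsEmpty.forall_iff, implies_true,
    forall_const, true_and]
  exact forall₂_congr fun a b => ⟨SameCycle.exists_nat_pow_eq, fun ⟨m, h⟩ => ⟨m, by simpa using h⟩⟩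

end Equiv.Perm

theorem card_and_forall_not_eq_sum_powerset {β ι : Type*} [Finite β] (P : β → Prop)
    (Q : ι → β → Prop) (s : Finset ι) :
    (Nat.card {b // P b ∧ ∀ i ∈ s, ¬ Q i b} : ℤ) =
      ∑ t ∈ s.powerset, (-1 : ℤ) ^ #t * Nat.card {b // P b ∧ ∀ i ∈ t, Q i b} := by
  classical
  have := Fintype.ofFinite β
  have hcard : ∀ R : β → Prop, Nat.card {b // P b ∧ R b} = #{b : {b // P b} | R b} := fun R => by
    rw [← Nat.card_congr (Equiv.subtypeSubtypeEquivSubtypeInter P R), Nat.card_eq_fintype_card,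
      Fintype.card_subtype]
  simp only [hcard]
  convert inclusion_exclusion_card_inf_compl s fun i => ({b | Q i b} : Finset {b // P b}) using 4
  · ext; simp [mem_inf]
  · congr 1; ext; simp [mem_inf]

theorem numDerangements_eq_sum_choose_mul_factorial (m : ℕ) :
    (numDerangements m : ℤ) = ∑ k ∈ range (m + 1), m.choose k • ((-1) ^ k * ((m - k)! : ℤ)) := by
  rw [numDerangements_sum]
  refine sum_congr rfl fun k hk => ?_
  have hkm : k + (m - k) = m := by have := mem_range.1 hk; omega
  rw [Nat.ascFactorial_eq_factorial_mul_choose, hkm, Nat.choose_symm (by omega), nsmul_eq_mul]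
  push_cast
  ring

theorem Fin.forall_val_ne_val_add_one_iff {m : ℕ} (f : Fin (m + 1) → Fin (m + 1)) :
    (∀ a, (f a : ℕ) ≠ a + 1) ↔ ∀ a ∈ univ.erase (Fin.last m), ¬ f a = a + 1 := by
  simp only [mem_erase, mem_univ, and_true]
  refine forall_congr' fun a => ?_
  rcases eq_or_ne a (Fin.last m) with rfl | ha
  · simpa using (f (Fin.last m)).is_lt.ne
  · simp [ha, Fin.ext_iff, Fin.val_add_one_of_lt (Fin.lt_last_iff_ne_last.2 ha)]

theorem card_isCircularOn_univ_forall_apply_eq_add_one {m : ℕ} {t : Finset (Fin (m + 1))}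
    (ht : t ⊆ univ.erase (Fin.last m)) :
    Nat.card {σ : Equiv.Perm (Fin (m + 1)) // σ.IsCircularOn univ ∧ ∀ a ∈ t, σ a = a + 1} =
      (m - #t)! := by
  have hlt : ∀ a ∈ t, a < Fin.last m := fun a ha =>
    Fin.lt_last_iff_ne_last.2 (ne_of_mem_erase (ht ha))
  rw [Equiv.Perm.card_isCircularOn_forall_apply_eq Fin.val univ t (· + 1)
    (fun _ _ => ⟨mem_univ _, mem_univ _⟩) (add_left_injective 1).injOn
    (fun a ha => by simp [Fin.val_add_one_of_lt (hlt a ha)])]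
  simp

/-- The number of cyclic permutations of `{1,...,n}` avoiding all substrings `j(j+1)`,
`1 ≤ j ≤ n-1`, equals the `(n-1)`-st derangement number. Values 0-indexed; a cyclic
permutation is a single-orbit permutation `σ`, and it contains substring `ab` iff `σ a = b`. -/
theorem cstar_n_eq_derangements (n : ℕ) :
    Nat.card {σ : Equiv.Perm (Fin n) //
        (∀ a b : Fin n, ∃ m : ℕ, (σ ^ m) a = b) ∧
        ∀ a : Fin n, ((σ a : ℕ)) ≠ (a : ℕ) + 1} =
      numDerangements (n - 1) := by
  cases n with
  | zero => simp
  | succ m =>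
  simp only [← Equiv.Perm.isCircularOn_univ_iff, Fin.forall_val_ne_val_add_one_iff,
    Nat.add_sub_cancel]
  zify
  rw [card_and_forall_not_eq_sum_powerset, numDerangements_eq_sum_choose_mul_factorial,
    sum_congr rfl fun t ht =>
      by rw [card_isCircularOn_univ_forall_apply_eq_add_one (mem_powerset.1 ht)],
    sum_powerset_apply_card fun k => (-1 : ℤ) ^ k * ((m - k)! : ℤ)]
  simp
end

section
/- The number of permutations p of {1,...,n} avoiding circular 1-successions mod n (i.e., p(i+1) ≢ p(i) + 1 (mod n) for all 1 ≤ i ≤ n-1, and p(1) ≢ p(n) + 1 (mod n)) equals n · [Σ_{j=0}^{n-1} (-1)^j · C(n, j) · (n-j-1)! + (-1)^n]. -/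
/-!
Let `c` be the cycle `i ↦ i + 1` on `n` points. Inclusion–exclusion over the set `A` of
positions with `p (c i) = c (p i)` reduces the problem to counting such `p` for a fixed `A`.
These are the `p` whose conjugate `τ = p⁻¹ c p` agrees with `c` on `A`, and every `n`-cycle `τ`
is `p⁻¹ c p` for exactly `n` permutations `p` (a coset of the centralizer of `c`). Writing
`τ = c σ` with `σ` supported on `B = Aᶜ`, `τ` is an `n`-cycle iff its first-return map to `B`,
which is `(first return of c) * σ|_B`, is a single cycle on `B`. So there are `(|B| - 1)!` such
`τ`, and each term of the inclusion–exclusion sum is `n (n - |A| - 1)!`.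
-/

open Finset
open scoped Nat

theorem Finset.card_forall_not_eq_sum_powerset {β ι : Type*} [Fintype β] [Fintype ι]
    (P : ι → β → Prop) :
    (Nat.card {b // ∀ i, ¬ P i b} : ℤ) =
      ∑ A ∈ (univ : Finset ι).powerset,
        (-1) ^ #A * (Nat.card {b // ∀ i ∈ A, P i b} : ℤ) := by
  classical
  have hinf (A : Finset ι) :
      A.inf (fun i => ({b | P i b} : Finset β)) = ({b | ∀ i ∈ A, P i b} : Finset β) := by
    ext b
    simp [mem_inf]
  have hinf_compl :
      univ.inf (fun i => ({b | P i b} : Finset β)ᶜ) = ({b | ∀ i, ¬ P i b} : Finset β) := by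
    ext b
    simp [mem_inf]
  have h := inclusion_exclusion_card_inf_compl univ fun i => ({b | P i b} : Finset β)
  rw [hinf_compl] at h
  simp only [hinf] at h
  simpa only [Nat.card_eq_fintype_card, Fintype.card_subtype] using h

namespace Equiv.Perm

variable {α : Type*}

/-- Unlike `IsCycle`, this also holds for the identity of a type with at most one element. -/
def IsFullCycle (π : Perm α) : Prop := ∀ x y, π.SameCycle x y

theorem IsFullCycle.of_subsingleton [Subsingleton α] (π : Perm α) : π.IsFullCycle :=
  fun x y => Subsingleton.elim x y ▸ SameCycle.refl π x

theorem IsFullCycle.conj {c : Perm α} (hc : c.IsFullCycle) (p : Perm α) :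
    (p⁻¹ * c * p).IsFullCycle := fun x y => by
  simpa using sameCycle_conj (g := p⁻¹) |>.2 (hc (p x) (p y))

variable [Fintype α]

theorem exists_pos_pow_apply_mem (τ : Perm α) (B : Finset α) (b : B) :
    ∃ k, 0 < k ∧ (τ ^ k) b ∈ B :=
  ⟨orderOf τ, orderOf_pos τ, by simp [pow_orderOf_eq_one]⟩

variable [DecidableEq α]

section FirstReturn

variable (τ : Perm α) (B : Finset α)

noncomputable def firstReturnTime (b : B) : ℕ := Nat.find (exists_pos_pow_apply_mem τ B b)

theorem firstReturnTime_pos (b : B) : 0 < firstReturnTime τ B b :=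
  (Nat.find_spec (exists_pos_pow_apply_mem τ B b)).1

theorem pow_firstReturnTime_apply_mem (b : B) : (τ ^ firstReturnTime τ B b) b ∈ B :=
  (Nat.find_spec (exists_pos_pow_apply_mem τ B b)).2

theorem firstReturnTime_le {b : B} {k : ℕ} (hk : 0 < k) (hmem : (τ ^ k) b ∈ B) :
    firstReturnTime τ B b ≤ k :=
  Nat.find_min' _ ⟨hk, hmem⟩

theorem pow_apply_notMem_of_lt_firstReturnTime {b : B} {k : ℕ} (hk : 0 < k)
    (hlt : k < firstReturnTime τ B b) : (τ ^ k) b ∉ B :=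
  fun hmem => (firstReturnTime_le τ B hk hmem).not_gt hlt

theorem firstReturnTime_eq {b : B} {k : ℕ} (hk : 0 < k) (hmem : (τ ^ k) b ∈ B)
    (hmin : ∀ j, 0 < j → j < k → (τ ^ j) b ∉ B) : firstReturnTime τ B b = k :=
  (firstReturnTime_le τ B hk hmem).antisymm <| not_lt.1 fun hlt =>
    hmin _ (firstReturnTime_pos τ B b) hlt (pow_firstReturnTime_apply_mem τ B b)

theorem injective_pow_firstReturnTime_apply :
    Function.Injective fun b : B => (⟨_, pow_firstReturnTime_apply_mem τ B b⟩ : B) := by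
  suffices key : ∀ b b' : B, firstReturnTime τ B b ≤ firstReturnTime τ B b' →
      (τ ^ firstReturnTime τ B b) b = (τ ^ firstReturnTime τ B b') b' → b = b' by
    intro b b' h
    have h := congrArg Subtype.val h
    rcases le_total (firstReturnTime τ B b) (firstReturnTime τ B b') with hle | hle
    exacts [key b b' hle h, (key b' b hle h.symm).symm]
  intro b b' hle h
  set t := firstReturnTime τ B b
  set t' := firstReturnTime τ B b'
  have hb : (b : α) = (τ ^ (t' - t)) b' := by
    apply (τ ^ t).injective
    rw [h, ← mul_apply, ← pow_add, Nat.add_sub_cancel' hle]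
  rcases hle.eq_or_lt with heq | hlt
  · exact Subtype.ext (by rwa [heq, Nat.sub_self, pow_zero, one_apply] at hb)
  · have := firstReturnTime_pos τ B b
    exact absurd (hb ▸ b.2) (pow_apply_notMem_of_lt_firstReturnTime τ B (by omega) (by omega))

noncomputable def firstReturn : Perm B :=
  Equiv.ofBijective _ (Finite.injective_iff_bijective.1 (injective_pow_firstReturnTime_apply τ B))

theorem coe_firstReturn_apply (b : B) :
    (firstReturn τ B b : α) = (τ ^ firstReturnTime τ B b) b := rfl

theorem sameCycle_firstReturn (b : B) : τ.SameCycle b (firstReturn τ B b) := by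
  rw [coe_firstReturn_apply]
  exact sameCycle_pow_right.2 (SameCycle.refl τ b)

variable {τ B}

theorem SameCycle.of_firstReturn {b b' : B} (h : (firstReturn τ B).SameCycle b b') :
    τ.SameCycle b b' := by
  obtain ⟨k, rfl⟩ := h.exists_nat_pow_eq
  clear h
  induction k with
  | zero => exact SameCycle.refl τ b
  | succ k ih =>
    rw [pow_succ', mul_apply]
    exact ih.trans (sameCycle_firstReturn τ B _)

theorem SameCycle.firstReturn_of_pow_apply_eq {k : ℕ} :
    ∀ {b b' : B}, (τ ^ k) b = b' → (firstReturn τ B).SameCycle b b' := by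
  induction k using Nat.strong_induction_on with
  | _ k ih =>
    intro b b' h
    rcases Nat.eq_zero_or_pos k with hk | hk
    · rw [hk, pow_zero, one_apply] at h
      obtain rfl : b = b' := Subtype.ext h
      exact SameCycle.refl _ b
    have hle : firstReturnTime τ B b ≤ k := firstReturnTime_le τ B hk (h ▸ b'.2)
    have hrest : (τ ^ (k - firstReturnTime τ B b)) (firstReturn τ B b) = b' := by
      rw [coe_firstReturn_apply, ← mul_apply, ← pow_add, Nat.sub_add_cancel hle, h]
    exact (sameCycle_apply_left.1 (ih _ (Nat.sub_lt hk (firstReturnTime_pos τ B b)) hrest))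

theorem isFullCycle_firstReturn_iff (hB : ∀ x, ∃ b ∈ B, τ.SameCycle x b) :
    (firstReturn τ B).IsFullCycle ↔ τ.IsFullCycle := by
  constructor
  · intro h x y
    obtain ⟨bx, hbx, hx⟩ := hB x
    obtain ⟨bxy, hby, hy⟩ := hB y
    exact hx.trans ((h ⟨bx, hbx⟩ ⟨bxy, hby⟩).of_firstReturn.trans hy.symm)
  · intro h b b'
    obtain ⟨k, hk⟩ := (h b b').exists_nat_pow_eq
    exact SameCycle.firstReturn_of_pow_apply_eq hk

theorem firstReturn_mul_ofSubtype (c : Perm α) (σ : Perm B) :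
    firstReturn (c * ofSubtype σ) B = firstReturn c B * σ := by
  ext b
  set t := firstReturnTime c B (σ b)
  have ht := firstReturnTime_pos c B (σ b)
  have htraj : ∀ j, 0 < j → j ≤ t → ((c * ofSubtype σ) ^ j) b = (c ^ j) (σ b) := by
    refine Nat.le_induction (by simp [ofSubtype_apply_of_mem]) fun j hj ih hjt => ?_
    rw [pow_succ', mul_apply, ih (by omega), mul_apply, ofSubtype_apply_of_not_mem σ
      (pow_apply_notMem_of_lt_firstReturnTime c B hj hjt), ← mul_apply, ← pow_succ']
  have htime : firstReturnTime (c * ofSubtype σ) B b = t := by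
    refine firstReturnTime_eq _ B ht ?_ fun j hj hjt => ?_
    · rw [htraj t ht le_rfl]
      exact pow_firstReturnTime_apply_mem c B (σ b)
    · rw [htraj j hj hjt.le]
      exact pow_apply_notMem_of_lt_firstReturnTime c B hj hjt
  rw [coe_firstReturn_apply, htime, htraj t ht le_rfl, mul_apply, coe_firstReturn_apply]

end FirstReturn

theorem isFullCycle_iff_cycleType (hα : 2 ≤ Fintype.card α) {π : Perm α} :
    π.IsFullCycle ↔ π.cycleType = {Fintype.card α} := by
  constructor
  · intro h
    have hsupp : π.support = univ := by
      refine eq_univ_of_forall fun x => mem_support.2 fun hx => ?_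
      obtain ⟨y, hy⟩ := Fintype.exists_ne_of_one_lt_card hα x
      exact hy ((h x y).eq_of_left hx).symm
    have hcycle : π.IsCycle := by
      obtain ⟨x⟩ : Nonempty α := Fintype.card_pos_iff.1 (by omega)
      exact ⟨x, mem_support.1 (hsupp ▸ mem_univ x), fun y _ => h x y⟩
    rw [hcycle.cycleType, hsupp, Finset.card_univ]
  · intro h x y
    have hcycle : π.IsCycle := card_cycleType_eq_one.1 (by simp [h])
    have hsupp : π.support = univ :=
      eq_univ_of_card _ (by rw [← sum_cycleType, h, Multiset.sum_singleton])
    exact hcycle.sameCycle (mem_support.1 (hsupp ▸ mem_univ x))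
      (mem_support.1 (hsupp ▸ mem_univ y))

theorem card_isFullCycle :
    Nat.card {π : Perm α // π.IsFullCycle} = (Fintype.card α - 1)! := by
  classical
  rcases le_or_gt (Fintype.card α) 1 with hα | hα
  · have : Subsingleton α := Fintype.card_le_one_iff_subsingleton.1 hα
    rw [Nat.card_eq_fintype_card, Fintype.card_subtype, Nat.sub_eq_zero_of_le hα]
    simp [IsFullCycle.of_subsingleton]
  · simp_rw [Nat.card_eq_fintype_card, Fintype.card_subtype, isFullCycle_iff_cycleType hα]
    rw [card_of_cycleType_singleton hα le_rfl, Nat.choose_self, mul_one]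

theorem IsFullCycle.nat_card_centralizer [Nonempty α] {c : Perm α} (hc : c.IsFullCycle) :
    Nat.card (Subgroup.centralizer {c}) = Fintype.card α := by
  rcases le_or_gt (Fintype.card α) 1 with hα | hα
  · have : Subsingleton α := Fintype.card_le_one_iff_subsingleton.1 hα
    rw [le_antisymm hα Fintype.card_pos]
    exact Nat.card_unique
  · rw [Equiv.Perm.nat_card_centralizer, (isFullCycle_iff_cycleType hα).1 hc]
    simp

theorem IsFullCycle.isConj {c τ : Perm α} (hc : c.IsFullCycle) (hτ : τ.IsFullCycle) :
    IsConj c τ := by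
  rcases le_or_gt (Fintype.card α) 1 with hα | hα
  · have : Subsingleton α := Fintype.card_le_one_iff_subsingleton.1 hα
    rw [Subsingleton.elim c τ]
  · rw [isConj_iff_cycleType_eq, (isFullCycle_iff_cycleType hα).1 hc,
      (isFullCycle_iff_cycleType hα).1 hτ]

theorem IsFullCycle.card_conj_eq [Nonempty α] {c τ : Perm α} (hc : c.IsFullCycle)
    (hτ : τ.IsFullCycle) : Nat.card {p : Perm α // p⁻¹ * c * p = τ} = Fintype.card α := by
  obtain ⟨g, rfl⟩ := isConj_iff.1 (hc.isConj hτ)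
  rw [← hc.nat_card_centralizer]
  refine Nat.card_congr (Equiv.subtypeEquiv (Equiv.mulRight g) fun p => ?_)
  change _ ↔ p * g ∈ _
  rw [Subgroup.mem_centralizer_singleton_iff]
  constructor
  · intro h
    calc p * g * c = p * (g * c * g⁻¹) * g := by group
      _ = c * (p * g) := by rw [← h]; group
  · intro h
    calc p⁻¹ * c * p = p⁻¹ * (c * (p * g)) * g⁻¹ := by group
      _ = g * c * g⁻¹ := by rw [← h]; group

theorem IsFullCycle.exists_sameCycle_mem {c τ : Perm α} (hc : c.IsFullCycle) {B : Finset α}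
    (hB : B.Nonempty) (hτ : ∀ x ∉ B, τ x = c x) (x : α) : ∃ b ∈ B, τ.SameCycle x b := by
  by_contra! h
  have hpow : ∀ k : ℕ, (c ^ k) x = (τ ^ k) x := by
    intro k
    induction k with
    | zero => rfl
    | succ k ih =>
      rw [pow_succ', mul_apply, ih, pow_succ', mul_apply,
        hτ _ fun hk => h _ hk (sameCycle_pow_right.2 (SameCycle.refl τ x))]
  obtain ⟨b, hb⟩ := hB
  obtain ⟨k, hk⟩ := (hc x b).exists_nat_pow_eq
  rw [hpow] at hk
  exact h b hb (hk ▸ sameCycle_pow_right.2 (SameCycle.refl τ x))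

theorem IsFullCycle.isFullCycle_mul_ofSubtype_iff {c : Perm α} (hc : c.IsFullCycle)
    {B : Finset α} (hB : B.Nonempty) (σ : Perm B) :
    (c * ofSubtype σ).IsFullCycle ↔ (firstReturn c B * σ).IsFullCycle := by
  rw [← firstReturn_mul_ofSubtype, isFullCycle_firstReturn_iff]
  exact hc.exists_sameCycle_mem hB fun x hx => by
    rw [mul_apply, ofSubtype_apply_of_not_mem σ hx]

/-- For `B = ∅` the truncated `#B - 1` is `0`, matching the single cycle `c`. -/
theorem IsFullCycle.card_eqOn_compl {c : Perm α} (hc : c.IsFullCycle) (B : Finset α) :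
    Nat.card {τ : Perm α // (∀ x ∉ B, τ x = c x) ∧ τ.IsFullCycle} = (#B - 1)! := by
  rcases B.eq_empty_or_nonempty with rfl | hB
  · have : Unique {τ : Perm α // (∀ x ∉ (∅ : Finset α), τ x = c x) ∧ τ.IsFullCycle} :=
      ⟨⟨⟨c, fun _ _ => rfl, hc⟩⟩,
        fun τ => Subtype.ext (Equiv.ext fun x => τ.2.1 x (notMem_empty x))⟩
    rw [Nat.card_unique]
    rfl
  let f (σ : {σ : Perm B // (firstReturn c B * σ).IsFullCycle}) :
      {τ : Perm α // (∀ x ∉ B, τ x = c x) ∧ τ.IsFullCycle} :=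
    ⟨c * ofSubtype σ.1, fun x hx => by rw [mul_apply, ofSubtype_apply_of_not_mem σ.1 hx],
      (hc.isFullCycle_mul_ofSubtype_iff hB σ.1).2 σ.2⟩
  have hf : Function.Bijective f := by
    refine ⟨fun σ σ' h => ?_, fun τ => ?_⟩
    · exact Subtype.ext (ofSubtype_injective (mul_left_cancel (congrArg Subtype.val h)))
    · obtain ⟨σ, hσ⟩ := (Perm.subtypeEquivSubtypePerm (· ∈ B)).surjective
        ⟨c⁻¹ * τ.1, fun x hx => by simp [τ.2.1 x hx]⟩
      have hτ : c * ofSubtype σ = τ.1 := by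
        have := congrArg Subtype.val hσ
        rw [Perm.subtypeEquivSubtypePerm_apply_coe] at this
        rw [this, mul_inv_cancel_left]
      exact ⟨⟨σ, (hc.isFullCycle_mul_ofSubtype_iff hB σ).1 (hτ ▸ τ.2.2)⟩, Subtype.ext hτ⟩
  calc Nat.card {τ : Perm α // (∀ x ∉ B, τ x = c x) ∧ τ.IsFullCycle}
      = Nat.card {σ : Perm B // (firstReturn c B * σ).IsFullCycle} :=
        (Nat.card_eq_of_bijective f hf).symm
    _ = Nat.card {π : Perm B // π.IsFullCycle} :=
        Nat.card_congr (Equiv.subtypeEquiv (Equiv.mulLeft (firstReturn c B)) fun _ => Iff.rfl)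
    _ = (#B - 1)! := by rw [card_isFullCycle, Fintype.card_coe]

theorem IsFullCycle.card_commute_on [Nonempty α] {c : Perm α} (hc : c.IsFullCycle)
    (A : Finset α) :
    Nat.card {p : Perm α // ∀ i ∈ A, p (c i) = c (p i)} =
      Fintype.card α * (Fintype.card α - #A - 1)! := by
  classical
  have hconj (p : Perm α) (i : α) : (p⁻¹ * c * p) i = c i ↔ p (c i) = c (p i) := by
    rw [mul_apply, mul_apply, Perm.inv_eq_iff_eq, eq_comm]
  let T : Finset (Perm α) := {τ | (∀ x ∉ Aᶜ, τ x = c x) ∧ τ.IsFullCycle}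
  have hT : #T = (Fintype.card α - #A - 1)! := by
    rw [← card_compl, ← hc.card_eqOn_compl, Nat.card_eq_fintype_card, Fintype.card_subtype]
  have hfiber (τ : Perm α) (hτ : τ ∈ T) :
      #{p ∈ ({p | ∀ i ∈ A, p (c i) = c (p i)} : Finset (Perm α)) | p⁻¹ * c * p = τ} =
        Fintype.card α := by
    rw [mem_filter] at hτ
    rw [← hc.card_conj_eq hτ.2.2, Nat.card_eq_fintype_card, Fintype.card_subtype,
      filter_filter]
    congr 1
    refine filter_congr fun p _ => and_iff_right_of_imp fun h i hi => ?_
    rw [← hconj, h]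
    exact hτ.2.1 i (by simpa using hi)
  rw [Nat.card_eq_fintype_card, Fintype.card_subtype, card_eq_sum_card_fiberwise (t := T)
    (f := fun p => p⁻¹ * c * p), sum_congr rfl hfiber, sum_const, hT, smul_eq_mul, mul_comm]
  intro p hp
  simp only [T, coe_filter, mem_univ, true_and, Set.mem_ofPred_eq, mem_compl, not_not] at hp ⊢
  exact ⟨fun i hi => (hconj p i).2 (hp i hi), hc.conj p⟩

theorem IsFullCycle.card_commute_nowhere [Nonempty α] {c : Perm α} (hc : c.IsFullCycle) :
    (Nat.card {p : Perm α // ∀ i, p (c i) ≠ c (p i)} : ℤ) =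
      Fintype.card α * (∑ j ∈ range (Fintype.card α),
        (-1) ^ j * (Fintype.card α).choose j * ((Fintype.card α - j - 1)! : ℤ) +
          (-1) ^ Fintype.card α) := by
  rw [card_forall_not_eq_sum_powerset, sum_congr rfl fun A _ => by rw [hc.card_commute_on A],
    sum_powerset_apply_card
      (fun j => (-1) ^ j * ((Fintype.card α * (Fintype.card α - j - 1)! : ℕ) : ℤ)),
    Finset.card_univ, sum_range_succ, Nat.choose_self, mul_add, mul_sum]
  push_cast
  simp only [nsmul_eq_mul, Nat.sub_self, Nat.zero_sub, Nat.factorial_zero]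
  congr 1
  · exact sum_congr rfl fun j _ => by ring
  · ring

end Equiv.Perm

open Equiv.Perm in
theorem isFullCycle_finRotate (n : ℕ) : (finRotate n).IsFullCycle := by
  rcases le_or_gt n 1 with hn | hn
  · have : Subsingleton (Fin n) := Fin.subsingleton_iff_le_one.2 hn
    exact IsFullCycle.of_subsingleton _
  · rw [isFullCycle_iff_cycleType (by rwa [Fintype.card_fin]), cycleType_finRotate_of_le hn,
      Fintype.card_fin]

theorem val_finRotate {n : ℕ} (k : Fin n) : (finRotate n k : ℕ) = (k + 1) % n := by
  have := k.neZero
  rw [finRotate_apply, Fin.val_add, Fin.val_one', Nat.add_mod_mod]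

/-- The number of permutations of `{1,...,n}` with no circular 1-succession mod `n`
(positions cyclic via `finRotate`, values compared mod `n`) equals
`n · (∑_{j=0}^{n-1} (-1)^j C(n,j) (n-j-1)! + (-1)^n)`. Values 0-indexed. -/
theorem Dstar_n_formula (n : ℕ) (hn : 1 ≤ n) :
    (Nat.card {p : Equiv.Perm (Fin n) //
        ∀ i : Fin n, ((p (finRotate n i)) : ℕ) ≠ ((p i : ℕ) + 1) % n} : ℤ) =
      (n : ℤ) * (∑ j ∈ Finset.range n,
        (-1 : ℤ) ^ j * n.choose j * (n - j - 1).factorial + (-1 : ℤ) ^ n) := by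
  have : Nonempty (Fin n) := ⟨⟨0, hn⟩⟩
  have hcond (p : Equiv.Perm (Fin n)) :
      (∀ i, (p (finRotate n i) : ℕ) ≠ (p i + 1) % n) ↔
        ∀ i, p (finRotate n i) ≠ finRotate n (p i) := by
    simp only [← val_finRotate, ne_eq, Fin.val_inj]
  rw [Nat.card_congr (Equiv.subtypeEquivRight hcond),
    (isFullCycle_finRotate n).card_commute_nowhere, Fintype.card_fin]
end

section
/- For n ≥ 3 with gcd(n,k) = 1 and 1 ≤ k < n, the number of permutations of {1,...,n} avoiding circular k-successions mod n equals the number of permutations of {1,...,n} avoiding circular 1-successions mod n. -/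
/-- For `n ≥ 3` with `gcd(n,k)=1`, `1 ≤ k < n`: the number of permutations of `{1,...,n}`
avoiding circular `k`-successions mod `n` equals the number avoiding circular
1-successions mod `n` (`D*^k_n = D*^1_n`). Values 0-indexed, positions cyclic. -/
theorem Dstar_k_eq_Dstar_one (n k : ℕ) (hk : 1 ≤ k) (hkn : k < n) (hn : 3 ≤ n)
    (hcop : Nat.gcd n k = 1) :
    Nat.card {p : Equiv.Perm (Fin n) //
        ∀ i : Fin n, ((p (finRotate n i)) : ℕ) ≠ ((p i : ℕ) + k) % n} =
      Nat.card {p : Equiv.Perm (Fin n) //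
        ∀ i : Fin n, ((p (finRotate n i)) : ℕ) ≠ ((p i : ℕ) + 1) % n} := by
  obtain ⟨m, rfl⟩ : ∃ m, n = m + 1 := ⟨n - 1, by omega⟩
  set N := m + 1 with hN
  have hcop' : Nat.Coprime k N := Nat.coprime_comm.mp hcop
  let u : (ZMod N)ˣ := ZMod.unitOfCoprime k hcop'
  let σ : Equiv.Perm (ZMod N) := MulAction.toPerm u⁻¹
  have hval_add : ∀ (b : ZMod N) (j : ℕ), (b + (j : ZMod N)).val = (b.val + j) % N := by
    intro b j
    rw [ZMod.val_add, ZMod.val_natCast]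
    conv_rhs => rw [Nat.add_mod]
    rw [Nat.mod_eq_of_lt (ZMod.val_lt b)]
  have hinj : Function.Injective (ZMod.val (n := N)) := ZMod.val_injective N
  have huk : (u : ZMod N) = (k : ZMod N) := ZMod.coe_unitOfCoprime k hcop'
  have key : ∀ a b : ZMod N,
      ((a.val ≠ (b.val + k) % N)) ↔ ((σ a).val ≠ ((σ b).val + 1) % N) := by
    intro a b
    have h1 : a.val = (b.val + k) % N ↔ a = b + (k : ZMod N) := by
      rw [← hval_add]; exact ⟨fun h => hinj h, fun h => h ▸ rfl⟩
    have h2 : (σ a).val = ((σ b).val + 1) % N ↔ σ a = σ b + (1 : ZMod N) := by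
      have := hval_add (σ b) 1
      rw [Nat.cast_one] at this
      rw [← this]; exact ⟨fun h => hinj h, fun h => h ▸ rfl⟩
    rw [Ne, Ne, h1, h2]
    have hσ : ∀ x : ZMod N, σ x = (u⁻¹ : (ZMod N)ˣ) * x := fun x => rfl
    constructor
    · intro h hc
      apply h
      have : (u : ZMod N) * (σ a) = (u : ZMod N) * (σ b + 1) := by rw [hc]
      rw [hσ a, hσ b] at this
      rw [mul_add, ← mul_assoc, ← mul_assoc] at this
      simp only [Units.mul_inv, one_mul, mul_one] at this
      rw [this, huk]
    · intro h hc
      apply h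
      rw [hσ a, hσ b, hc, mul_add, ← huk]
      simp only [Units.inv_mul, mul_one]
  -- ZMod N is defeq Fin N; build the bijection
  let σ' : Equiv.Perm (Fin N) := σ
  refine Nat.card_congr (Equiv.subtypeEquiv (Equiv.mulLeft σ') fun p => ?_)
  constructor
  · intro h i
    exact (key (p (finRotate N i)) (p i)).mp (h i)
  · intro h i
    exact (key (p (finRotate N i)) (p i)).mpr (h i)
end

section
/- For a prime p ≥ 3 and any k with 1 ≤ k ≤ p-1, the number of permutations of {1,...,p} avoiding circular k-successions mod p is the same for every such k. -/
/-- For a prime `p ≥ 3`, the number of permutations of `{1,...,p}` avoiding circular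
`k`-successions mod `p` is the same for every `k` with `1 ≤ k ≤ p-1`. Values 0-indexed. -/
theorem Dstar_k_prime (p : ℕ) (hp : p.Prime) (hp3 : 3 ≤ p)
    (k₁ k₂ : ℕ) (hk₁ : 1 ≤ k₁) (hk₁' : k₁ ≤ p - 1) (hk₂ : 1 ≤ k₂) (hk₂' : k₂ ≤ p - 1) :
    Nat.card {q : Equiv.Perm (Fin p) //
        ∀ i : Fin p, ((q (finRotate p i)) : ℕ) ≠ ((q i : ℕ) + k₁) % p} =
      Nat.card {q : Equiv.Perm (Fin p) //
        ∀ i : Fin p, ((q (finRotate p i)) : ℕ) ≠ ((q i : ℕ) + k₂) % p} := by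
  haveI : Fact p.Prime := ⟨hp⟩
  haveI : NeZero p := ⟨hp.pos.ne'⟩
  -- nonzeroness of k₁, k₂ in ZMod p
  have hklt : ∀ k : ℕ, 1 ≤ k → k ≤ p - 1 → (k : ZMod p) ≠ 0 := by
    intro k h1 h2 h0
    have hlt : k < p := lt_of_le_of_lt h2 (Nat.sub_lt hp.pos one_pos)
    have := (ZMod.natCast_eq_zero_iff k p).mp h0
    have := Nat.le_of_dvd (by omega) this
    omega
  have hk1z : (k₁ : ZMod p) ≠ 0 := hklt k₁ hk₁ hk₁'
  have hk2z : (k₂ : ZMod p) ≠ 0 := hklt k₂ hk₂ hk₂'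
  set c : ZMod p := (k₂ : ZMod p) * (k₁ : ZMod p)⁻¹ with hc
  have hcz : c ≠ 0 := mul_ne_zero hk2z (inv_ne_zero hk1z)
  have hck : c * (k₁ : ZMod p) = (k₂ : ZMod p) := by
    rw [hc, mul_assoc, inv_mul_cancel₀ hk1z, mul_one]
  -- the equiv ZMod p ≃ Fin p
  let ι : ZMod p ≃ Fin p :=
    { toFun := fun z => ⟨z.val, ZMod.val_lt z⟩
      invFun := fun i => ((i : ℕ) : ZMod p)
      left_inv := fun z => by simp [ZMod.natCast_val, ZMod.cast_id]
      right_inv := fun i => by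
        apply Fin.ext
        simp [ZMod.val_natCast, Nat.mod_eq_of_lt i.isLt] }
  have hι : ∀ z : ZMod p, ((ι z : Fin p) : ℕ) = z.val := fun z => rfl
  -- multiplication by c as a permutation of Fin p
  let E : Equiv.Perm (Fin p) :=
    ι.symm.trans ((Equiv.mulLeft₀ c hcz).trans ι)
  have hE : ∀ x : Fin p, (((E x : Fin p) : ℕ) : ZMod p) = c * ((x : ℕ) : ZMod p) := by
    intro x
    show (((ι (c * ((x : ℕ) : ZMod p))).1 : ℕ) : ZMod p) = _
    rw [hι]
    simp [ZMod.natCast_val, ZMod.cast_id]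
  -- translation lemma
  have key : ∀ (k : ℕ) (x y : Fin p),
      ((x : ℕ) ≠ ((y : ℕ) + k) % p) ↔
        (((x : ℕ) : ZMod p) ≠ ((y : ℕ) : ZMod p) + (k : ZMod p)) := by
    intro k x y
    constructor
    · intro h hz
      apply h
      have : ((x : ℕ) : ZMod p) = ((((y : ℕ) + k) % p : ℕ) : ZMod p) := by
        push_cast
        simpa using hz
      have hmod := (ZMod.natCast_eq_natCast_iff _ _ _).mp this
      have hx : (x : ℕ) % p = (x : ℕ) := Nat.mod_eq_of_lt x.isLt
      have hy : (((y : ℕ) + k) % p) % p = ((y : ℕ) + k) % p := Nat.mod_mod_of_dvd _ dvd_rfl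
      unfold Nat.ModEq at hmod
      omega
    · intro h he
      apply h
      rw [he]
      push_cast
      simp
  apply Nat.card_congr
  refine Equiv.subtypeEquiv (Equiv.mulLeft E) ?_
  have hmul : ∀ (q : Equiv.Perm (Fin p)) (x : Fin p), ((Equiv.mulLeft E) q) x = E (q x) :=
    fun q x => rfl
  intro q
  constructor
  · intro h i
    have h1 := (key k₁ _ _).mp (h i)
    rw [key k₂, hmul, hmul]
    show (((E (q (finRotate p i)) : Fin p) : ℕ) : ZMod p) ≠ _
    rw [hE, hE, ← hck]
    intro hcontra
    apply h1
    have : c * (((q (finRotate p i) : ℕ) : ZMod p)) = c * ((((q i : ℕ) : ZMod p)) + (k₁ : ZMod p)) := by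
      rw [hcontra]; ring
    exact mul_left_cancel₀ hcz this
  · intro h i
    have h2 := (key k₂ _ _).mp (h i)
    rw [hmul, hmul] at h2
    rw [key k₁]
    intro hcontra
    apply h2
    show (((E (q (finRotate p i)) : Fin p) : ℕ) : ZMod p) = _
    rw [hE, hE, ← hck, hcontra]
    ring
end
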